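/- arXiv:1709.03591 — 13 statements merged into one kernel-verified Lean document; each statement's English description precedes it below -/
import Mathlib

section
/- The map Ψ is the orthogonal projection of the space of n×n real matrices onto comm(A) with respect to the trace inner product: for every n×n real matrix M, Ψ(M) lies in comm(A) and M − Ψ(M) is orthogonal to every element of comm(A), i.e., tr((M − Ψ(M))ᵀ N) = 0 for all N with AN = NA. -/
open Matrix BigOperators

/-- The projection `Ψ(M) = ∑ r, E r * M * E r` onto the commutant. -/
def Psi {n d : ℕ} (E : Fin d → Matrix (Fin n) (Fin n) ℝ)
    (M : Matrix (Fin n) (Fin n) ℝ) : Matrix (Fin n) (Fin n) ℝ :=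
  ∑ r, E r * M * E r

/-- `Ψ` is the orthogonal projection onto the commutant of `A` with respect to the trace
inner product: `Ψ(M)` commutes with `A`, and `M - Ψ(M)` is orthogonal to every matrix
commuting with `A`. -/
theorem psi_orthogonal_projection (n d : ℕ) (hn : 1 ≤ n)
    (A : Matrix (Fin n) (Fin n) ℝ) (hA : Aᵀ = A)
    (θ : Fin d → ℝ) (hθ : Function.Injective θ)
    (E : Fin d → Matrix (Fin n) (Fin n) ℝ)
    (hEsymm : ∀ r, (E r)ᵀ = E r)
    (hEidem : ∀ r, E r * E r = E r)
    (hEorth : ∀ r s, r ≠ s → E r * E s = 0)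
    (hEsum : ∑ r, E r = 1)
    (hdecomp : A = ∑ r, θ r • E r)
    (M : Matrix (Fin n) (Fin n) ℝ) :
    A * Psi E M = Psi E M * A ∧
      ∀ N : Matrix (Fin n) (Fin n) ℝ, A * N = N * A → ((M - Psi E M)ᵀ * N).trace = 0 := by
  have hAE : ∀ r, A * E r = θ r • E r := by
    intro r
    rw [hdecomp, Finset.sum_mul]
    rw [Finset.sum_eq_single r]
    · rw [smul_mul_assoc, hEidem]
    · intro s _ hs
      rw [smul_mul_assoc, hEorth s r hs, smul_zero]
    · intro h; exact absurd (Finset.mem_univ r) h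
  have hEA : ∀ r, E r * A = θ r • E r := by
    intro r
    rw [hdecomp, Finset.mul_sum]
    rw [Finset.sum_eq_single r]
    · rw [mul_smul_comm, hEidem]
    · intro s _ hs
      rw [mul_smul_comm, hEorth r s (Ne.symm hs), smul_zero]
    · intro h; exact absurd (Finset.mem_univ r) h
  constructor
  · unfold Psi
    rw [Finset.mul_sum, Finset.sum_mul]
    refine Finset.sum_congr rfl fun r _ => ?_
    rw [show A * (E r * M * E r) = (A * E r) * (M * E r) by noncomm_ring, hAE r,
      show E r * M * E r * A = (E r * M) * (E r * A) by noncomm_ring, hEA r]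
    simp [smul_mul_assoc, mul_smul_comm, mul_assoc]
  · intro N hN
    -- E r * N * E s = 0 for r ≠ s
    have hcross : ∀ r s, r ≠ s → E r * N * E s = 0 := by
      intro r s hrs
      have h1 : E r * (A * N) * E s = θ r • (E r * N * E s) := by
        rw [← mul_assoc, hEA r, smul_mul_assoc, smul_mul_assoc]
      have h2 : E r * (N * A) * E s = θ s • (E r * N * E s) := by
        rw [mul_assoc, mul_assoc, hAE s, mul_smul_comm, mul_smul_comm, ← mul_assoc]
      rw [hN, h2] at h1
      have hθne : θ s - θ r ≠ 0 := sub_ne_zero.mpr fun h => hrs (hθ h).symm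
      have := sub_eq_zero.mpr h1
      rw [← sub_smul] at this
      exact (smul_eq_zero.mp this).resolve_left hθne
    -- N = Psi E N
    have hNfix : Psi E N = N := by
      have h0 : N = ∑ s, ∑ r, E r * N * E s := by
        calc N = (∑ r, E r) * N * (∑ s, E s) := by rw [hEsum, one_mul, mul_one]
        _ = ∑ s, (∑ r, E r) * N * E s := by rw [Finset.mul_sum]
        _ = ∑ s, ∑ r, E r * N * E s := by
            refine Finset.sum_congr rfl fun s _ => ?_
            rw [Finset.sum_mul, Finset.sum_mul]
      conv_rhs => rw [h0]
      unfold Psi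
      refine Finset.sum_congr rfl fun s _ => ?_
      refine (Finset.sum_eq_single (f := fun r => E r * N * E s) s ?_ ?_).symm
      · intro r _ hrs; exact hcross r s hrs
      · intro h; exact absurd (Finset.mem_univ s) h
    have key : ((Psi E M)ᵀ * N).trace = (Mᵀ * N).trace := by
      conv_rhs => rw [← hNfix]
      unfold Psi
      rw [transpose_sum, Finset.sum_mul, trace_sum, Finset.mul_sum, trace_sum]
      refine Finset.sum_congr rfl fun r _ => ?_
      rw [transpose_mul, transpose_mul, hEsymm]
      rw [mul_assoc, mul_assoc, trace_mul_comm]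
      simp [mul_assoc]
    rw [transpose_sub, sub_mul, trace_sub, key, sub_self]
end

section
/- For every n×n complex matrix D, the time-averaged state converges to Ψ(D): as T → ∞, (1/T)·∫₀ᵀ exp(itA) · D · exp(−itA) dt tends to Σ_{r=1}^d E_r D E_r. -/
/-!
With `A = ∑ θ_r E_r` and the `E_r` complete orthogonal idempotents, `exp (itA) = ∑ e^{itθ_r} E_r`,
so the integrand is the trigonometric polynomial `∑_{r,s} e^{it(θ_r - θ_s)} (E_r D E_s) a b`.
The time average of `e^{iωt}` is `1` for `ω = 0` and `O(1 / (|ω| T))` otherwise, and since `θ` is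
injective the zero frequencies are exactly the diagonal pairs `r = s`.
-/

open Matrix MeasureTheory Filter Topology

namespace CompleteOrthogonalIdempotents

variable {ι R : Type*} [Fintype ι] {e : ι → R}

theorem sum_smul_pow {S : Type*} [CommSemiring S] [Semiring R] [Algebra S R]
    (he : CompleteOrthogonalIdempotents e) (c : ι → S) (k : ℕ) :
    (∑ i, c i • e i) ^ k = ∑ i, c i ^ k • e i := by
  classical
  induction k with
  | zero => simpa using he.complete.symm
  | succ k ih =>
    rw [pow_succ, ih, Finset.sum_mul]
    refine Finset.sum_congr rfl fun i _ => ?_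
    simp_rw [Finset.mul_sum, smul_mul_smul_comm, he.mul_eq, smul_ite, smul_zero,
      Finset.sum_ite_eq, Finset.mem_univ, if_true, pow_succ]

variable [Ring R] [Algebra ℂ R] [TopologicalSpace R] [IsTopologicalRing R]
  [ContinuousSMul ℂ R] [T2Space R]

theorem exp_sum_smul (he : CompleteOrthogonalIdempotents e) (c : ι → ℂ) :
    NormedSpace.exp (∑ i, c i • e i) = ∑ i, Complex.exp (c i) • e i := by
  rw [NormedSpace.exp_eq_tsum ℂ]
  refine HasSum.tsum_eq ?_
  simp_rw [he.sum_smul_pow, Finset.smul_sum, smul_smul]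
  refine hasSum_sum fun i _ => HasSum.smul_const ?_ (e i)
  rw [Complex.exp_eq_exp_ℂ]
  exact NormedSpace.exp_series_hasSum_exp' (𝕂 := ℂ) (c i)

theorem exp_smul_mul_mul_exp_neg_smul (he : CompleteOrthogonalIdempotents e) (c : ι → ℂ)
    (z : ℂ) (x : R) :
    NormedSpace.exp (z • ∑ i, c i • e i) * x * NormedSpace.exp (-z • ∑ i, c i • e i) =
      ∑ i, ∑ j, Complex.exp (z * (c i - c j)) • (e i * x * e j) := by
  simp_rw [Finset.smul_sum, smul_smul, he.exp_sum_smul, Finset.sum_mul, Finset.mul_sum,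
    smul_mul_assoc, mul_smul_comm, smul_smul, ← Complex.exp_add, neg_mul, ← sub_eq_add_neg,
    ← mul_sub]

end CompleteOrthogonalIdempotents

section TimeAverage

open Complex

theorem norm_integral_exp_mul_I_le {ω : ℝ} (hω : ω ≠ 0) (T : ℝ) :
    ‖∫ t in (0 : ℝ)..T, cexp (I * ω * t)‖ ≤ 2 / |ω| := by
  have hunit (s : ℝ) : ‖cexp (I * ω * s)‖ = 1 := by
    rw [show I * ω * s = ((ω * s : ℝ) : ℂ) * I by push_cast; ring, norm_exp_ofReal_mul_I]
  rw [integral_exp_mul_complex (by simp [hω]), norm_div, norm_mul, norm_I, one_mul, norm_real,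
    Real.norm_eq_abs]
  gcongr
  calc _ ≤ ‖cexp (I * ω * T)‖ + ‖cexp (I * ω * (0 : ℝ))‖ := norm_sub_le _ _
    _ = 2 := by rw [hunit, hunit]; norm_num

theorem tendsto_average_exp_mul_I (ω : ℝ) :
    Tendsto (fun T : ℝ => (1 / (T : ℂ)) * ∫ t in (0 : ℝ)..T, cexp (I * ω * t)) atTop
      (𝓝 (if ω = 0 then 1 else 0)) := by
  split_ifs with hω
  · subst hω
    refine tendsto_const_nhds.congr' ?_
    filter_upwards [eventually_ne_atTop 0] with T hT
    simp [hT]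
  · refine squeeze_zero_norm' ?_ ((tendsto_const_nhds (x := 2 / |ω|)).div_atTop tendsto_id)
    filter_upwards [eventually_gt_atTop 0] with T hT
    rw [norm_mul, norm_div, norm_one, norm_real, Real.norm_of_nonneg hT.le, id, one_div_mul_eq_div]
    exact div_le_div_of_nonneg_right (norm_integral_exp_mul_I_le hω T) hT.le

theorem tendsto_average_sum_exp_mul_I {κ : Type*} [Fintype κ] (ω : κ → ℝ) (m : κ → ℂ) :
    Tendsto (fun T : ℝ => (1 / (T : ℂ)) * ∫ t in (0 : ℝ)..T, ∑ k, cexp (I * ω k * t) * m k)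
      atTop (𝓝 (∑ k, if ω k = 0 then m k else 0)) := by
  have hint (k : κ) (T : ℝ) :
      IntervalIntegrable (fun t : ℝ => cexp (I * ω k * t) * m k) volume 0 T :=
    (by fun_prop : Continuous fun t : ℝ => cexp (I * ω k * t) * m k).intervalIntegrable _ _
  simp_rw [intervalIntegral.integral_finsetSum fun k _ => hint k _,
    intervalIntegral.integral_mul_const, Finset.mul_sum, ← mul_assoc]
  refine tendsto_finsetSum _ fun k _ => ?_
  convert (tendsto_average_exp_mul_I (ω k)).mul_const (m k) using 2
  split_ifs <;> simp

end TimeAverage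

theorem average_state_tendsto_general (n d : ℕ)
    (A : Matrix (Fin n) (Fin n) ℝ)
    (θ : Fin d → ℝ) (hθ : Function.Injective θ)
    (E : Fin d → Matrix (Fin n) (Fin n) ℝ)
    (hEidem : ∀ r, E r * E r = E r)
    (hEorth : ∀ r s, r ≠ s → E r * E s = 0)
    (hEsum : ∑ r, E r = 1)
    (hdecomp : A = ∑ r, θ r • E r)
    (D : Matrix (Fin n) (Fin n) ℂ) (a b : Fin n) :
    Tendsto
      (fun T : ℝ => (1 / (T : ℂ)) *
        ∫ t in (0 : ℝ)..T,
          (NormedSpace.exp ((Complex.I * (t : ℂ)) • A.map (Complex.ofReal)) * D *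
            NormedSpace.exp ((-(Complex.I * (t : ℂ))) • A.map (Complex.ofReal))) a b)
      atTop
      (𝓝 ((∑ r, (E r).map (Complex.ofReal) * D * (E r).map (Complex.ofReal)) a b)) := by
  set F : Fin d → Matrix (Fin n) (Fin n) ℂ := fun r => (E r).map Complex.ofReal
  have hF : CompleteOrthogonalIdempotents F :=
    (CompleteOrthogonalIdempotents.mk ⟨hEidem, fun r s => hEorth r s⟩ hEsum).map
      (Complex.ofRealHom.mapMatrix (m := Fin n))
  have hAF : A.map Complex.ofReal = ∑ r, (θ r : ℂ) • F r := by
    subst hdecomp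
    ext i j
    simp [F, Matrix.sum_apply]
  have hstate (t : ℝ) :
      (NormedSpace.exp ((Complex.I * (t : ℂ)) • A.map Complex.ofReal) * D *
        NormedSpace.exp ((-(Complex.I * (t : ℂ))) • A.map Complex.ofReal)) a b =
      ∑ p : Fin d × Fin d, Complex.exp (Complex.I * (θ p.1 - θ p.2 : ℝ) * t) *
        (F p.1 * D * F p.2) a b := by
    rw [hAF, hF.exp_smul_mul_mul_exp_neg_smul, Fintype.sum_prod_type]
    simp only [Matrix.sum_apply, Matrix.smul_apply, smul_eq_mul, Complex.ofReal_sub,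
      mul_right_comm _ (t : ℂ)]
  have hdiag : (∑ r, F r * D * F r) a b =
      ∑ p : Fin d × Fin d, if θ p.1 - θ p.2 = 0 then (F p.1 * D * F p.2) a b else 0 := by
    simp only [sub_eq_zero, hθ.eq_iff, Fintype.sum_prod_type, Matrix.sum_apply, Finset.sum_ite_eq,
      Finset.mem_univ, if_true]
  rw [hdiag]
  convert tendsto_average_sum_exp_mul_I (fun p : Fin d × Fin d => θ p.1 - θ p.2)
    (fun p => (F p.1 * D * F p.2) a b) using 3 with T
  exact intervalIntegral.integral_congr fun t _ => hstate t

/-- For every `n × n` complex matrix `D`, the time-averaged state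
`(1/T) ∫₀ᵀ exp(itA) D exp(-itA) dt` converges (entrywise) to `∑ r, E r * D * E r`
as `T → ∞`. -/
theorem average_state_tendsto (n d : ℕ) (hn : 1 ≤ n)
    (A : Matrix (Fin n) (Fin n) ℝ) (hA : Aᵀ = A)
    (θ : Fin d → ℝ) (hθ : Function.Injective θ)
    (E : Fin d → Matrix (Fin n) (Fin n) ℝ)
    (hEsymm : ∀ r, (E r)ᵀ = E r)
    (hEidem : ∀ r, E r * E r = E r)
    (hEorth : ∀ r s, r ≠ s → E r * E s = 0)
    (hEsum : ∑ r, E r = 1)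
    (hdecomp : A = ∑ r, θ r • E r)
    (D : Matrix (Fin n) (Fin n) ℂ) (a b : Fin n) :
    Tendsto
      (fun T : ℝ => (1 / (T : ℂ)) *
        ∫ t in (0 : ℝ)..T,
          (NormedSpace.exp ((Complex.I * (t : ℂ)) • A.map (Complex.ofReal)) * D *
            NormedSpace.exp ((-(Complex.I * (t : ℂ))) • A.map (Complex.ofReal))) a b)
      atTop
      (𝓝 ((∑ r, (E r).map (Complex.ofReal) * D * (E r).map (Complex.ofReal)) a b)) :=
  average_state_tendsto_general n d A θ hθ E hEidem hEorth hEsum hdecomp D a b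
end

section
/- As T → ∞, the time average (1/T)·∫₀ᵀ M(t) dt of the mixing matrices M(t) = U(t) ∘ conj(U(t)) converges (entrywise) to the average mixing matrix Σ_{r=1}^d E_r ∘ E_r, where ∘ denotes the Schur (entrywise) product. -/
open Matrix BigOperators MeasureTheory Filter Topology

/-!
Since `exp (c • p) = 1 + (e^c - 1) • p` for an idempotent `p`, and the `E r` commute and
annihilate each other, `exp (i t A) = ∑ r, e^{i t θ r} E r`. Hence the `(a, b)` entry of `M(t)`
is `∑ r s, E r a b * E s a b * e^{i (θ r - θ s) t}`. The time average of `e^{i ω t}` tends to `1`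
if `ω = 0` and to `0` otherwise (the integral stays bounded by `2 / |ω|`); as the `θ r` are
distinct, only the diagonal terms `r = s` survive.
-/

open Complex

theorem NormedSpace.exp_smul_of_isIdempotentElem {𝔸 : Type*} [Ring 𝔸] [Algebra ℂ 𝔸]
    [TopologicalSpace 𝔸] [IsTopologicalRing 𝔸] [ContinuousSMul ℂ 𝔸] [T2Space 𝔸]
    {p : 𝔸} (hp : IsIdempotentElem p) (c : ℂ) :
    NormedSpace.exp (c • p) = 1 + (Complex.exp c - 1) • p := by
  have hscalar : HasSum (fun k : ℕ => ((k.factorial : ℂ)⁻¹ * c ^ k) • p) (Complex.exp c • p) := by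
    rw [Complex.exp_eq_exp_ℂ]
    exact (NormedSpace.exp_series_hasSum_exp' (𝕂 := ℂ) c).smul_const p
  have hseries : HasSum (fun k : ℕ => ((k.factorial : ℂ)⁻¹) • (c • p) ^ k)
      (Complex.exp c • p + (1 - p)) := by
    convert hscalar.add (hasSum_ite_eq 0 (1 - p)) using 1
    funext k
    rcases k with _ | k
    · simp
    · rw [smul_pow, hp.pow_succ_eq, smul_smul, if_neg k.succ_ne_zero, add_zero]
  rw [congrFun (NormedSpace.exp_eq_tsum ℂ) (c • p), hseries.tsum_eq, sub_smul, one_smul]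
  abel

namespace Matrix

variable {m ι : Type*} [Fintype m] [DecidableEq m]

theorem exp_sum_smul_of_orthogonal_idempotents {P : ι → Matrix m m ℂ}
    (hidem : ∀ i, IsIdempotentElem (P i)) (horth : Pairwise fun i j => P i * P j = 0)
    (c : ι → ℂ) (s : Finset ι) :
    NormedSpace.exp (∑ i ∈ s, c i • P i) = 1 + ∑ i ∈ s, (Complex.exp (c i) - 1) • P i := by
  classical
  induction s using Finset.induction with
  | empty => simp
  | @insert j s hj ih =>
    have hne : ∀ i ∈ s, j ≠ i := fun i hi h => hj (h ▸ hi)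
    have hcomm : Commute (c j • P j) (∑ i ∈ s, c i • P i) :=
      Commute.sum_right _ _ _ fun i hi => by
        simp only [Commute, SemiconjBy, smul_mul_smul_comm, horth (hne i hi),
          horth (hne i hi).symm, smul_zero]
    have hannihilate : P j * ∑ i ∈ s, (Complex.exp (c i) - 1) • P i = 0 := by
      rw [Finset.mul_sum]
      exact Finset.sum_eq_zero fun i hi => by rw [mul_smul_comm, horth (hne i hi), smul_zero]
    rw [Finset.sum_insert hj, Finset.sum_insert hj, exp_add_of_commute _ _ hcomm, ih,
      NormedSpace.exp_smul_of_isIdempotentElem (hidem j)]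
    simp only [mul_add, add_mul, mul_one, one_mul, smul_mul_assoc, hannihilate, smul_zero,
      add_zero]
    abel

theorem exp_sum_smul_of_orthogonal_idempotents_of_sum_eq_one [Fintype ι] {P : ι → Matrix m m ℂ}
    (hidem : ∀ i, IsIdempotentElem (P i)) (horth : Pairwise fun i j => P i * P j = 0)
    (hsum : ∑ i, P i = 1) (c : ι → ℂ) :
    NormedSpace.exp (∑ i, c i • P i) = ∑ i, Complex.exp (c i) • P i := by
  rw [exp_sum_smul_of_orthogonal_idempotents hidem horth, ← hsum, ← Finset.sum_add_distrib]
  simp only [sub_smul, one_smul, add_sub_cancel]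

theorem exp_I_mul_smul_map_ofReal [Fintype ι] {A : Matrix m m ℝ} {θ : ι → ℝ}
    {E : ι → Matrix m m ℝ} (hidem : ∀ i, E i * E i = E i)
    (horth : Pairwise fun i j => E i * E j = 0) (hsum : ∑ i, E i = 1)
    (hA : A = ∑ i, θ i • E i) (t : ℝ) :
    NormedSpace.exp ((I * t) • A.map ofReal) =
      ∑ i, Complex.exp (θ i * t * I) • (E i).map ofReal := by
  let φ : Matrix m m ℝ →+* Matrix m m ℂ := ofRealHom.mapMatrix
  have hφ : ∀ M, φ M = M.map ofReal := fun _ => rfl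
  have hexponent : (I * t) • A.map ofReal = ∑ i, (θ i * t * I) • (E i).map ofReal := by
    ext a b
    simp only [hA, map_apply, smul_apply, sum_apply, smul_eq_mul, ofReal_sum, ofReal_mul,
      Finset.mul_sum]
    exact Finset.sum_congr rfl fun i _ => by ring
  rw [hexponent, exp_sum_smul_of_orthogonal_idempotents_of_sum_eq_one]
  · exact fun i => by simp_rw [IsIdempotentElem, ← hφ, ← map_mul, hidem]
  · exact fun i j hij => by simp_rw [← hφ, ← map_mul, horth hij, map_zero]
  · simp_rw [← hφ, ← map_sum, hsum, map_one]

end Matrix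

theorem Matrix.sum_exp_smul_hadamard_conj_apply {ι m n : Type*} [Fintype ι] (θ : ι → ℝ)
    (E : ι → Matrix m n ℝ) (t : ℝ) (a : m) (b : n) :
    ((∑ i, Complex.exp (θ i * t * I) • (E i).map ofReal) ⊙
        (∑ i, Complex.exp (θ i * t * I) • (E i).map ofReal).map (starRingEnd ℂ)) a b =
      ∑ p : ι × ι, (E p.1 a b : ℂ) * E p.2 a b * Complex.exp ((θ p.1 - θ p.2 : ℝ) * t * I) := by
  have hconj : ∀ i, starRingEnd ℂ (Complex.exp (θ i * t * I)) = Complex.exp (-(θ i * t * I)) :=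
    fun i => by rw [← Complex.exp_conj]; simp
  simp only [hadamard_apply, map_apply, sum_apply, smul_apply, smul_eq_mul, map_sum, map_mul,
    hconj, conj_ofReal, Finset.sum_mul_sum, ← Finset.sum_product', Finset.univ_product_univ]
  refine Finset.sum_congr rfl fun p _ => ?_
  rw [ofReal_sub, sub_mul, sub_mul, sub_eq_add_neg, exp_add]
  ring

theorem tendsto_average_exp_ofReal_mul_I (ω : ℝ) :
    Tendsto (fun T : ℝ => (1 / (T : ℂ)) * ∫ t in (0 : ℝ)..T, exp (ω * t * I)) atTop
      (𝓝 (if ω = 0 then 1 else 0)) := by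
  split_ifs with hω
  · refine tendsto_const_nhds.congr' ?_
    filter_upwards [eventually_ne_atTop 0] with T hT
    simp [hω, hT]
  · have hc : (ω : ℂ) * I ≠ 0 := mul_ne_zero (ofReal_ne_zero.mpr hω) I_ne_zero
    have hbound : ∀ T : ℝ, ‖∫ t in (0 : ℝ)..T, exp (ω * t * I)‖ ≤ 2 / |ω| := by
      intro T
      have hintegral :
          ∫ t in (0 : ℝ)..T, exp (ω * t * I) = (exp (↑(ω * T) * I) - 1) / (ω * I) := by
        simp_rw [mul_right_comm _ _ I, integral_exp_mul_complex hc]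
        simp only [ofReal_zero, mul_zero, ofReal_mul, mul_right_comm _ I, zero_mul, exp_zero]
      rw [hintegral, norm_div, norm_mul, norm_I, mul_one, norm_real, Real.norm_eq_abs]
      gcongr
      calc ‖exp (↑(ω * T) * I) - 1‖ ≤ ‖exp (↑(ω * T) * I)‖ + ‖(1 : ℂ)‖ := norm_sub_le _ _
        _ = 2 := by rw [norm_exp_ofReal_mul_I, norm_one]; norm_num
    have hinv : Tendsto (fun T : ℝ => 1 / (T : ℂ)) atTop (𝓝 0) := by
      simpa [Function.comp_def] using (continuous_ofReal.tendsto 0).comp tendsto_inv_atTop_zero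
    exact hinv.zero_mul_isBoundedUnder_le ⟨2 / |ω|, eventually_map.mpr (.of_forall hbound)⟩

theorem tendsto_average_sum_exp_ofReal_mul_I {ι : Type*} (s : Finset ι) (c : ι → ℂ)
    (ω : ι → ℝ) :
    Tendsto (fun T : ℝ => (1 / (T : ℂ)) * ∫ t in (0 : ℝ)..T, ∑ i ∈ s, c i * exp (ω i * t * I))
      atTop (𝓝 (∑ i ∈ s, if ω i = 0 then c i else 0)) := by
  have hintegrable : ∀ i T, IntervalIntegrable (fun t : ℝ => c i * exp (ω i * t * I)) volume 0 T :=
    fun i T => (by fun_prop : Continuous fun t : ℝ => c i * exp (ω i * t * I)).intervalIntegrable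
      _ _
  simp_rw [intervalIntegral.integral_finsetSum fun i _ => hintegrable i _,
    intervalIntegral.integral_const_mul, Finset.mul_sum, mul_left_comm (1 / _ : ℂ)]
  refine tendsto_finsetSum _ fun i _ => ?_
  simpa only [mul_ite, mul_one, mul_zero] using
    (tendsto_average_exp_ofReal_mul_I (ω i)).const_mul (c i)

theorem average_mixing_tendsto_general (n d : ℕ)
    (A : Matrix (Fin n) (Fin n) ℝ)
    (θ : Fin d → ℝ) (hθ : Function.Injective θ)
    (E : Fin d → Matrix (Fin n) (Fin n) ℝ)
    (hEidem : ∀ r, E r * E r = E r)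
    (hEorth : ∀ r s, r ≠ s → E r * E s = 0)
    (hEsum : ∑ r, E r = 1)
    (hdecomp : A = ∑ r, θ r • E r)
    (a b : Fin n) :
    Tendsto
      (fun T : ℝ => (1 / (T : ℂ)) *
        ∫ t in (0 : ℝ)..T,
          ((NormedSpace.exp ((Complex.I * (t : ℂ)) • A.map (Complex.ofReal))) ⊙
            ((NormedSpace.exp ((Complex.I * (t : ℂ)) • A.map (Complex.ofReal))).map
              (starRingEnd ℂ))) a b)
      atTop
      (𝓝 ((∑ r, (E r).map (Complex.ofReal) ⊙ (E r).map (Complex.ofReal)) a b)) := by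
  simp_rw [exp_I_mul_smul_map_ofReal hEidem hEorth hEsum hdecomp,
    sum_exp_smul_hadamard_conj_apply]
  have hdiagonal : (∑ r, (E r).map ofReal ⊙ (E r).map ofReal) a b =
      ∑ p : Fin d × Fin d,
        if θ p.1 - θ p.2 = 0 then (E p.1 a b : ℂ) * E p.2 a b else 0 := by
    simp [sub_eq_zero, hθ.eq_iff, Fintype.sum_prod_type, Matrix.sum_apply]
  rw [hdiagonal]
  exact tendsto_average_sum_exp_ofReal_mul_I _ _ _

/-- The time average `(1/T) ∫₀ᵀ M(t) dt` of the mixing matrices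
`M(t) = U(t) ∘ conj(U(t))`, where `U(t) = exp(itA)`, converges entrywise to the average
mixing matrix `∑ r, E r ∘ E r` as `T → ∞`. -/
theorem average_mixing_tendsto (n d : ℕ) (hn : 1 ≤ n)
    (A : Matrix (Fin n) (Fin n) ℝ) (hA : Aᵀ = A)
    (θ : Fin d → ℝ) (hθ : Function.Injective θ)
    (E : Fin d → Matrix (Fin n) (Fin n) ℝ)
    (hEsymm : ∀ r, (E r)ᵀ = E r)
    (hEidem : ∀ r, E r * E r = E r)
    (hEorth : ∀ r s, r ≠ s → E r * E s = 0)
    (hEsum : ∑ r, E r = 1)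
    (hdecomp : A = ∑ r, θ r • E r)
    (a b : Fin n) :
    Tendsto
      (fun T : ℝ => (1 / (T : ℂ)) *
        ∫ t in (0 : ℝ)..T,
          ((NormedSpace.exp ((Complex.I * (t : ℂ)) • A.map (Complex.ofReal))) ⊙
            ((NormedSpace.exp ((Complex.I * (t : ℂ)) • A.map (Complex.ofReal))).map
              (starRingEnd ℂ))) a b)
      atTop
      (𝓝 ((∑ r, (E r).map (Complex.ofReal) ⊙ (E r).map (Complex.ofReal)) a b)) :=
  average_mixing_tendsto_general n d A θ hθ E hEidem hEorth hEsum hdecomp a b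
end

section
/- The average mixing matrix is the Gram matrix of the average pure states: for all indices a, b, the (a,b) entry of M̂ = Σ_r E_r ∘ E_r equals the trace inner product tr(Ψ(D_a)ᵀ Ψ(D_b)) of the matrices Ψ(D_a) and Ψ(D_b). -/
open Matrix BigOperators

theorem OrthogonalIdempotents.sum_sandwich_mul_sum_sandwich {R ι : Type*} [Ring R]
    [Fintype ι] {E : ι → R} (hE : OrthogonalIdempotents E) (x y : R) :
    (∑ r, E r * x * E r) * (∑ s, E s * y * E s) = ∑ r, E r * x * E r * y * E r := by
  rw [Finset.sum_mul_sum]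
  refine Finset.sum_congr rfl fun r _ => ?_
  rw [Finset.sum_eq_single r]
  · simp only [← mul_assoc, mul_assoc _ (E r) (E r), (hE.idem r).eq]
  · intro s _ hsr
    simp only [← mul_assoc, mul_assoc _ (E r) (E s), hE.ortho hsr.symm, mul_zero, zero_mul]
  · simp

theorem Matrix.trace_sandwich_of_isIdempotentElem {m R : Type*} [Fintype m] [CommSemiring R]
    {E : Matrix m m R} (hE : IsIdempotentElem E) (X : Matrix m m R) :
    (E * X * E).trace = (X * E).trace := by
  rw [mul_assoc, trace_mul_comm, mul_assoc, hE.eq]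

theorem Psi_transpose {n d : ℕ} {E : Fin d → Matrix (Fin n) (Fin n) ℝ}
    (hE : ∀ r, (E r)ᵀ = E r) (M : Matrix (Fin n) (Fin n) ℝ) :
    (Psi E M)ᵀ = Psi E Mᵀ := by
  simp only [Psi, transpose_sum, transpose_mul, hE, mul_assoc]

theorem avg_mixing_gram_general (n d : ℕ)
    (E : Fin d → Matrix (Fin n) (Fin n) ℝ)
    (hEsymm : ∀ r, (E r)ᵀ = E r)
    (hEidem : ∀ r, E r * E r = E r)
    (hEorth : ∀ r s, r ≠ s → E r * E s = 0)
    (a b : Fin n) :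
    (∑ r, E r ⊙ E r) a b =
      ((Psi E (Matrix.single a a (1 : ℝ)))ᵀ *
        Psi E (Matrix.single b b (1 : ℝ))).trace := by
  have hE : OrthogonalIdempotents E := ⟨hEidem, fun _ _ => hEorth _ _⟩
  rw [Psi_transpose hEsymm, transpose_single, Psi, Psi, hE.sum_sandwich_mul_sum_sandwich,
    trace_sum, Matrix.sum_apply]
  refine Finset.sum_congr rfl fun r _ => ?_
  have hba : E r b a = E r a b := congrFun (congrFun (hEsymm r) a) b
  rw [show E r * single a a 1 * E r * single b b 1 * E r
      = E r * (single a a 1 * E r * single b b 1) * E r by simp only [mul_assoc],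
    trace_sandwich_of_isIdempotentElem (hE.idem r), single_mul_mul_single, trace_single_mul,
    hadamard_apply, hba]
  simp only [one_mul, mul_one, smul_eq_mul]

/-- The average mixing matrix `M̂ = ∑ r, E r ⊙ E r` is the Gram matrix of the average
states `Ψ(D_a)`, where `D_a = e_a e_aᵀ`: its `(a,b)` entry is `tr(Ψ(D_a)ᵀ Ψ(D_b))`. -/
theorem avg_mixing_gram (n d : ℕ) (hn : 1 ≤ n)
    (A : Matrix (Fin n) (Fin n) ℝ) (hA : Aᵀ = A)
    (θ : Fin d → ℝ) (hθ : Function.Injective θ)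
    (E : Fin d → Matrix (Fin n) (Fin n) ℝ)
    (hEsymm : ∀ r, (E r)ᵀ = E r)
    (hEidem : ∀ r, E r * E r = E r)
    (hEorth : ∀ r s, r ≠ s → E r * E s = 0)
    (hEsum : ∑ r, E r = 1)
    (hdecomp : A = ∑ r, θ r • E r)
    (a b : Fin n) :
    (∑ r, E r ⊙ E r) a b =
      ((Psi E (Matrix.single a a (1 : ℝ)))ᵀ *
        Psi E (Matrix.single b b (1 : ℝ))).trace :=
  avg_mixing_gram_general n d E hEsymm hEidem hEorth a b
end

section
/- The rank of the average mixing matrix M̂ = Σ_r E_r ∘ E_r equals the dimension of the ℝ-linear span of the matrices {Ψ(D_a) : a an index}, where D_a = e_a e_aᵀ. -/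
/-! Writing `Ψ(D_a) = ∑ r, (E r e_a)(E r e_a)ᵀ`, the Frobenius inner product of `Ψ(D_a)` and
`Ψ(D_b)` is `∑ r s, ((E r * E s) a b)²`, which orthogonality of the idempotents collapses to
`∑ r, (E r a b)²`. So `M̂` is the Gram matrix of the family `Ψ(D_a)`, and a real Gram matrix has
the rank of the span of its family. -/

open Matrix BigOperators

namespace Matrix

variable {R ι m n : Type*} [Field R] [LinearOrder R] [IsStrictOrderedRing R] [Fintype ι]
  [Fintype m] [Fintype n]

theorem rank_of_dotProduct_eq_finrank_span (v : ι → m → R) :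
    (of fun a b => v a ⬝ᵥ v b).rank = Module.finrank R (Submodule.span R (Set.range v)) := by
  rw [show (of fun a b => v a ⬝ᵥ v b) = of v * (of v)ᵀ from rfl, rank_self_mul_transpose,
    rank_eq_finrank_span_row]
  rfl

theorem rank_of_frobenius_eq_finrank_span (v : ι → Matrix m n R) :
    (of fun a b => ∑ i, ∑ j, v a i j * v b i j).rank =
      Module.finrank R (Submodule.span R (Set.range v)) := by
  let flatten : Matrix m n R ≃ₗ[R] (m × n → R) :=
    (ofLinearEquiv R).symm.trans (LinearEquiv.curry R R m n).symm
  have hgram : (of fun a b => ∑ i, ∑ j, v a i j * v b i j) =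
      of fun a b => flatten (v a) ⬝ᵥ flatten (v b) := by
    ext a b
    simp [dotProduct, Fintype.sum_prod_type, flatten]
  rw [hgram, rank_of_dotProduct_eq_finrank_span, Set.range_comp', ← LinearEquiv.coe_coe,
    ← Submodule.map_span, LinearEquiv.finrank_map_eq]

end Matrix

section Psi

variable {n d : ℕ} (E : Fin d → Matrix (Fin n) (Fin n) ℝ)

theorem Psi_single_apply (a i j : Fin n) :
    Psi E (single a a 1) i j = ∑ r, E r i a * E r a j := by
  simp [Psi, Matrix.sum_apply, mul_apply, single_apply, ite_and]

theorem frobenius_Psi_single (hE : ∀ r, (E r)ᵀ = E r) (a b : Fin n) :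
    ∑ i, ∑ j, Psi E (single a a 1) i j * Psi E (single b b 1) i j =
      ∑ r, ∑ s, (E r * E s) a b ^ 2 := by
  have hsymm : ∀ r i j, E r i j = E r j i := fun r i j => congrFun₂ (hE r) j i
  have hsq : ∀ r s, (E r * E s) a b ^ 2 =
      ∑ i, ∑ j, E r i a * E r a j * (E s i b * E s b j) := by
    intro r s
    rw [sq, mul_apply, Finset.sum_mul_sum]
    refine Finset.sum_congr rfl fun i _ => Finset.sum_congr rfl fun j _ => ?_
    rw [hsymm r a i, hsymm s j b]
    ring
  simp only [hsq, Psi_single_apply, Finset.sum_mul_sum]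
  calc _ = ∑ i, ∑ r, ∑ s, ∑ j, E r i a * E r a j * (E s i b * E s b j) :=
        Finset.sum_congr rfl fun i _ => Finset.sum_comm.trans
          (Finset.sum_congr rfl fun r _ => Finset.sum_comm)
    _ = _ := Finset.sum_comm.trans (Finset.sum_congr rfl fun r _ => Finset.sum_comm)

theorem sum_sq_mul_apply_eq_hadamard (hEidem : ∀ r, E r * E r = E r)
    (hEorth : ∀ r s, r ≠ s → E r * E s = 0) (a b : Fin n) :
    ∑ r, ∑ s, (E r * E s) a b ^ 2 = (∑ r, E r ⊙ E r) a b := by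
  rw [Matrix.sum_apply]
  refine Finset.sum_congr rfl fun r _ => ?_
  rw [Finset.sum_eq_single r (fun s _ hs => by simp [hEorth r s (Ne.symm hs)]) (by simp),
    hEidem, sq, hadamard_apply]

end Psi

theorem rank_avg_mixing_eq_dim_span_general (n d : ℕ)
    (E : Fin d → Matrix (Fin n) (Fin n) ℝ)
    (hEsymm : ∀ r, (E r)ᵀ = E r)
    (hEidem : ∀ r, E r * E r = E r)
    (hEorth : ∀ r s, r ≠ s → E r * E s = 0) :
    (∑ r, E r ⊙ E r).rank =
      Module.finrank ℝ
        (Submodule.span ℝ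
          (Set.range fun a : Fin n => Psi E (Matrix.single a a (1 : ℝ)))) := by
  have hgram : ∑ r, E r ⊙ E r =
      of fun a b => ∑ i, ∑ j, Psi E (single a a 1) i j * Psi E (single b b 1) i j := by
    ext a b
    rw [of_apply, frobenius_Psi_single E hEsymm, sum_sq_mul_apply_eq_hadamard E hEidem hEorth]
  rw [hgram, rank_of_frobenius_eq_finrank_span]

/-- The rank of the average mixing matrix `M̂ = ∑ r, E r ⊙ E r` equals the dimension of
the span of the average states `Ψ(D_a)`, where `D_a = e_a e_aᵀ`. -/
theorem rank_avg_mixing_eq_dim_span (n d : ℕ) (hn : 1 ≤ n)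
    (A : Matrix (Fin n) (Fin n) ℝ) (hA : Aᵀ = A)
    (θ : Fin d → ℝ) (hθ : Function.Injective θ)
    (E : Fin d → Matrix (Fin n) (Fin n) ℝ)
    (hEsymm : ∀ r, (E r)ᵀ = E r)
    (hEidem : ∀ r, E r * E r = E r)
    (hEorth : ∀ r s, r ≠ s → E r * E s = 0)
    (hEsum : ∑ r, E r = 1)
    (hdecomp : A = ∑ r, θ r • E r) :
    (∑ r, E r ⊙ E r).rank =
      Module.finrank ℝ
        (Submodule.span ℝ
          (Set.range fun a : Fin n => Psi E (Matrix.single a a (1 : ℝ)))) :=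
  rank_avg_mixing_eq_dim_span_general n d E hEsymm hEidem hEorth
end

section
/- The average mixing matrix is completely positive semidefinite: there exist real positive semidefinite n×n matrices N_1, …, N_n (namely N_a = Ψ(D_a)) such that the (a,b) entry of M̂ = Σ_r E_r ∘ E_r equals tr(N_aᵀ N_b) for all a, b. In particular, M̂ is symmetric positive semidefinite. -/
open Matrix BigOperators

namespace Matrix

lemma posSemidef_single_one {m : Type*} [DecidableEq m] (a : m) :
    (single a a (1 : ℝ)).PosSemidef := by
  rw [← diagonal_single]
  exact PosSemidef.diagonal (Pi.single_nonneg.mpr zero_le_one)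

lemma trace_mul_single_mul_single {m R : Type*} [Fintype m] [DecidableEq m] [CommSemiring R]
    (a b : m) (X Y : Matrix m m R) :
    (X * single a a 1 * Y * single b b 1).trace = X b a * Y a b := by
  simp [trace, mul_apply, single, ite_and, mul_comm]

/-- `M` is the Gram matrix `Bᵀ * B` of the vectorizations `B (i, j) a = N a i j`. -/
lemma PosSemidef.of_apply_eq_trace_transpose_mul {ι m : Type*} [Fintype ι] [Fintype m]
    {M : Matrix ι ι ℝ} {N : ι → Matrix m m ℝ} (h : ∀ a b, M a b = ((N a)ᵀ * N b).trace) : M.PosSemidef := by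
  let B : Matrix (m × m) ι ℝ := of fun p a => N a p.1 p.2
  have hM : M = Bᴴ * B := by
    ext a b
    rw [h, conjTranspose_eq_transpose_of_trivial, mul_apply, Fintype.sum_prod_type,
      Finset.sum_comm]
    simp [B, trace, mul_apply]
  exact hM ▸ posSemidef_conjTranspose_mul_self B

end Matrix

section Psi

variable {n d : ℕ} {E : Fin d → Matrix (Fin n) (Fin n) ℝ}

lemma posSemidef_Psi (hEsymm : ∀ r, (E r)ᵀ = E r) {M : Matrix (Fin n) (Fin n) ℝ}
    (hM : M.PosSemidef) : (Psi E M).PosSemidef := by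
  refine posSemidef_sum _ fun r _ => ?_
  simpa [conjTranspose_eq_transpose_of_trivial, hEsymm] using hM.conjTranspose_mul_mul_same (E r)

lemma Psi_mul_Psi (hEidem : ∀ r, E r * E r = E r) (hEorth : ∀ r s, r ≠ s → E r * E s = 0)
    (X Y : Matrix (Fin n) (Fin n) ℝ) :
    Psi E X * Psi E Y = ∑ r, E r * X * E r * Y * E r := by
  rw [Psi, Psi, Finset.sum_mul_sum]
  refine Finset.sum_congr rfl fun r _ => ?_
  rw [Finset.sum_eq_single r]
  · simp only [← Matrix.mul_assoc, Matrix.mul_assoc (E r * X) (E r) (E r), hEidem]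
  · intro s _ hsr
    simp only [← Matrix.mul_assoc, Matrix.mul_assoc _ (E r) (E s), hEorth r s hsr.symm,
      Matrix.mul_zero, Matrix.zero_mul]
  · simp

lemma trace_Psi_mul_Psi (hEidem : ∀ r, E r * E r = E r)
    (hEorth : ∀ r s, r ≠ s → E r * E s = 0) (X Y : Matrix (Fin n) (Fin n) ℝ) :
    (Psi E X * Psi E Y).trace = ∑ r, (E r * X * E r * Y).trace := by
  rw [Psi_mul_Psi hEidem hEorth, trace_sum]
  refine Finset.sum_congr rfl fun r _ => ?_
  rw [trace_mul_cycle, ← Matrix.mul_assoc, ← Matrix.mul_assoc, hEidem]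

end Psi

theorem avg_mixing_cpsd_general (n d : ℕ)
    (E : Fin d → Matrix (Fin n) (Fin n) ℝ)
    (hEsymm : ∀ r, (E r)ᵀ = E r)
    (hEidem : ∀ r, E r * E r = E r)
    (hEorth : ∀ r s, r ≠ s → E r * E s = 0) :
    (∃ N : Fin n → Matrix (Fin n) (Fin n) ℝ,
        (∀ a, (N a).PosSemidef) ∧
          ∀ a b, (∑ r, E r ⊙ E r) a b = ((N a)ᵀ * N b).trace) ∧
      (∑ r, E r ⊙ E r).PosSemidef := by
  let N (a : Fin n) := Psi E (single a a 1)
  have hN (a : Fin n) : (N a).PosSemidef := posSemidef_Psi hEsymm (posSemidef_single_one a)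
  have hgram (a b : Fin n) : (∑ r, E r ⊙ E r) a b = ((N a)ᵀ * N b).trace := by
    rw [← conjTranspose_eq_transpose_of_trivial, (hN a).isHermitian.eq,
      trace_Psi_mul_Psi hEidem hEorth, Matrix.sum_apply]
    refine Finset.sum_congr rfl fun r _ => ?_
    rw [trace_mul_single_mul_single, hadamard_apply, ← transpose_apply (E r) a b, hEsymm]
  exact ⟨⟨N, hN, hgram⟩, PosSemidef.of_apply_eq_trace_transpose_mul hgram⟩

/-- The average mixing matrix `M̂ = ∑ r, E r ⊙ E r` is completely positive semidefinite:
there are real positive semidefinite matrices `N a` (namely `Ψ(D_a)`) with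
`M̂ a b = tr((N a)ᵀ (N b))`; in particular `M̂` is (symmetric) positive semidefinite. -/
theorem avg_mixing_cpsd (n d : ℕ) (hn : 1 ≤ n)
    (A : Matrix (Fin n) (Fin n) ℝ) (hA : Aᵀ = A)
    (θ : Fin d → ℝ) (hθ : Function.Injective θ)
    (E : Fin d → Matrix (Fin n) (Fin n) ℝ)
    (hEsymm : ∀ r, (E r)ᵀ = E r)
    (hEidem : ∀ r, E r * E r = E r)
    (hEorth : ∀ r s, r ≠ s → E r * E s = 0)
    (hEsum : ∑ r, E r = 1)
    (hdecomp : A = ∑ r, θ r • E r) :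
    (∃ N : Fin n → Matrix (Fin n) (Fin n) ℝ,
        (∀ a, (N a).PosSemidef) ∧
          ∀ a b, (∑ r, E r ⊙ E r) a b = ((N a)ᵀ * N b).trace) ∧
      (∑ r, E r ⊙ E r).PosSemidef :=
  avg_mixing_cpsd_general n d E hEsymm hEidem hEorth
end

section
/- If D is an n×n real diagonal matrix, then Ψ(D) = 0 if and only if all diagonal entries of Ψ(D) are zero (equivalently, I ∘ Ψ(D) = 0). -/
open Matrix BigOperators

/-- If `D` is diagonal, then `Ψ(D) = 0` if and only if all diagonal entries of `Ψ(D)`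
vanish. -/
theorem psi_diag_zero_iff (n d : ℕ) (hn : 1 ≤ n)
    (A : Matrix (Fin n) (Fin n) ℝ) (hA : Aᵀ = A)
    (θ : Fin d → ℝ) (hθ : Function.Injective θ)
    (E : Fin d → Matrix (Fin n) (Fin n) ℝ)
    (hEsymm : ∀ r, (E r)ᵀ = E r)
    (hEidem : ∀ r, E r * E r = E r)
    (hEorth : ∀ r s, r ≠ s → E r * E s = 0)
    (hEsum : ∑ r, E r = 1)
    (hdecomp : A = ∑ r, θ r • E r)
    (D : Matrix (Fin n) (Fin n) ℝ) (hD : D.IsDiag) :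
    Psi E D = 0 ↔ ∀ a, Psi E D a a = 0 := by
  constructor
  · intro h a; simp [h]
  · intro h
    set P := Psi E D with hP
    have hDsymm : Dᵀ = D := by
      ext i j
      by_cases hij : i = j
      · subst hij; simp
      · simp [Matrix.transpose_apply, hD hij, hD (Ne.symm hij)]
    have hPsymm : Pᵀ = P := by
      rw [hP]
      unfold Psi
      rw [Matrix.transpose_sum]
      refine Finset.sum_congr rfl fun r _ => ?_
      rw [Matrix.transpose_mul, Matrix.transpose_mul, hEsymm, hDsymm, ← mul_assoc]
    -- P * P = ∑ r, E r * D * E r * D * E r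
    have hPP : P * P = ∑ r, E r * D * (E r * (D * E r)) := by
      rw [hP]
      unfold Psi
      rw [Finset.sum_mul_sum]
      rw [Finset.sum_congr rfl fun r _ => rfl]
      refine Finset.sum_congr rfl fun r _ => ?_
      rw [Finset.sum_eq_single r]
      · have : E r * D * E r * (E r * D * E r)
            = E r * D * (E r * E r) * D * E r := by simp only [mul_assoc]
        rw [this, hEidem]; simp only [mul_assoc]
      · intro s _ hs
        have : E r * D * E r * (E s * D * E s)
            = E r * D * (E r * E s) * D * E s := by simp only [mul_assoc]
        rw [this, hEorth r s (Ne.symm hs)]; simp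
      · intro hr; exact absurd (Finset.mem_univ r) hr
    have key : (P * P).trace = (D * P).trace := by
      rw [hPP, Matrix.trace_sum, hP]
      unfold Psi
      rw [Matrix.mul_sum, Matrix.trace_sum]
      refine Finset.sum_congr rfl fun r _ => ?_
      have h1 : E r * D * (E r * (D * E r)) = (E r * D * E r) * (D * E r) := by simp only [mul_assoc]
      rw [h1, Matrix.trace_mul_comm]
      have h2 : D * E r * (E r * D * E r) = D * (E r * E r) * D * E r := by simp only [mul_assoc]
      rw [h2, hEidem]
      have h3 : D * E r * D * E r = D * (E r * D * E r) := by simp only [mul_assoc]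
      rw [h3]
    have hDP : (D * P).trace = 0 := by
      rw [Matrix.trace]
      apply Finset.sum_eq_zero
      intro a _
      simp only [Matrix.diag_apply, Matrix.mul_apply]
      apply Finset.sum_eq_zero
      intro b _
      by_cases hab : a = b
      · subst hab; rw [h a]; ring
      · rw [hD hab]; ring
    have hfrob : ∑ j, ∑ i, (P i j) ^ 2 = 0 := by
      have : (Pᵀ * P).trace = ∑ j, ∑ i, (P i j) ^ 2 := by
        rw [Matrix.trace]
        refine Finset.sum_congr rfl fun j _ => ?_
        simp [Matrix.mul_apply, sq]
      rw [← this, hPsymm, key, hDP]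
    have hallz : ∀ j ∈ Finset.univ, ∑ i, (P i j) ^ 2 = 0 := by
      rw [← Finset.sum_eq_zero_iff_of_nonneg]
      · exact hfrob
      · intro j _
        exact Finset.sum_nonneg fun i _ => sq_nonneg _
    ext i j
    have := (Finset.sum_eq_zero_iff_of_nonneg (fun i _ => sq_nonneg (P i j))).mp
      (hallz j (Finset.mem_univ j)) i (Finset.mem_univ i)
    have := pow_eq_zero_iff (n := 2) (by norm_num) |>.mp this
    simpa [hP] using this
end

section
/- The commutant of A decomposes as the orthogonal direct sum comm(A) = Ψ(𝒟) ⊕ 𝒜₀ with respect to the trace inner product, where 𝒟 is the space of n×n real diagonal matrices, Ψ(𝒟) is its image under Ψ, and 𝒜₀ = {N ∈ comm(A) : N ∘ I = 0} is the set of matrices commuting with A whose diagonal entries are all zero. That is, Ψ(𝒟) ∩ 𝒜₀ = {0}, every element of comm(A) is a sum of an element of Ψ(𝒟) and an element of 𝒜₀, and the two subspaces are orthogonal. -/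
/-!
`Ψ` is the orthogonal projection, for the trace inner product, onto `comm(A)`: it is idempotent
and self-adjoint because the `E r` are symmetric orthogonal idempotents, its range lies in
`comm(A)`, and it fixes `comm(A)` because `E r * N * E s = 0` for `r ≠ s` when `N` commutes with
`A` (compare `θ r • E r N E s` with `θ s • E r N E s`). Hence for diagonal `D` and `N ∈ 𝒜₀`,
`⟨Ψ D, N⟩ = ⟨D, N⟩ = ∑ i, D i i * N i i = 0`, which gives orthogonality and the trivial
intersection. For the sum one needs a diagonal `D` with `diag (Ψ D) = diag M`. On diagonals,
`v ↦ diag Ψ(diagonal v)` is the symmetric matrix `∑ r, E r ⊙ E r`; a vector `u` in its kernel has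
`‖Ψ(diagonal u)‖² = ⟨diagonal u, Ψ(diagonal u)⟩ = 0`, so `diag M ⬝ᵥ u = ⟨Ψ(diagonal u), M⟩ = 0`,
and `diag M`, being orthogonal to the kernel, lies in the range.
-/

open Matrix BigOperators

namespace OrthogonalIdempotents

variable {ι R : Type*} [Fintype ι] [DecidableEq ι] [Ring R] {E : ι → R}

theorem mul_sum_mul_mul_self (hE : OrthogonalIdempotents E) (X : R) (r : ι) :
    E r * ∑ s, E s * X * E s = E r * X * E r := by
  simp only [Finset.mul_sum, ← mul_assoc, hE.mul_eq, ite_mul, zero_mul, Finset.sum_ite_eq,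
    Finset.mem_univ, if_true]

theorem sum_mul_mul_self_idempotent (hE : OrthogonalIdempotents E) (X : R) :
    ∑ r, E r * (∑ s, E s * X * E s) * E r = ∑ r, E r * X * E r := by
  refine Finset.sum_congr rfl fun r _ => ?_
  rw [hE.mul_sum_mul_mul_self, mul_assoc, (hE.idem r).eq]

variable {K : Type*} [CommRing K] [Algebra K R]

theorem sum_smul_mul (hE : OrthogonalIdempotents E) (θ : ι → K) (r : ι) :
    (∑ s, θ s • E s) * E r = θ r • E r := by
  simp only [Finset.sum_mul, smul_mul_assoc, hE.mul_eq, smul_ite, smul_zero, Finset.sum_ite_eq',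
    Finset.mem_univ, if_true]

theorem mul_sum_smul (hE : OrthogonalIdempotents E) (θ : ι → K) (r : ι) :
    E r * (∑ s, θ s • E s) = θ r • E r := by
  simp only [Finset.mul_sum, mul_smul_comm, hE.mul_eq, smul_ite, smul_zero, Finset.sum_ite_eq,
    Finset.mem_univ, if_true]

theorem sum_smul_mul_mul_mul (hE : OrthogonalIdempotents E) (θ : ι → K) (X : R) (r s : ι) :
    (∑ t, θ t • E t) * (E r * X * E s) = θ r • (E r * X * E s) := by
  rw [← mul_assoc, ← mul_assoc, hE.sum_smul_mul, smul_mul_assoc, smul_mul_assoc]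

theorem mul_mul_mul_sum_smul (hE : OrthogonalIdempotents E) (θ : ι → K) (X : R) (r s : ι) :
    E r * X * E s * (∑ t, θ t • E t) = θ s • (E r * X * E s) := by
  rw [mul_assoc, hE.mul_sum_smul, mul_smul_comm]

theorem commute_sum_smul_sum_mul_mul_self (hE : OrthogonalIdempotents E) (θ : ι → K) (X : R) :
    Commute (∑ s, θ s • E s) (∑ r, E r * X * E r) := by
  rw [Commute, SemiconjBy, Finset.mul_sum, Finset.sum_mul]
  refine Finset.sum_congr rfl fun r _ => ?_
  rw [hE.sum_smul_mul_mul_mul, hE.mul_mul_mul_sum_smul]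

theorem mul_mul_eq_zero_of_commute [NoZeroSMulDivisors K R] (hE : OrthogonalIdempotents E)
    {θ : ι → K} (hθ : Function.Injective θ) {N : R} (hN : Commute (∑ s, θ s • E s) N) {r s : ι}
    (hrs : r ≠ s) : E r * N * E s = 0 := by
  have h : θ r • (E r * N * E s) = θ s • (E r * N * E s) :=
    calc θ r • (E r * N * E s) = E r * (∑ t, θ t • E t) * N * E s := by
          rw [hE.mul_sum_smul, smul_mul_assoc, smul_mul_assoc]
      _ = E r * N * ((∑ t, θ t • E t) * E s) := by
          rw [mul_assoc (E r), hN.eq, ← mul_assoc, mul_assoc]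
      _ = θ s • (E r * N * E s) := by rw [hE.sum_smul_mul, mul_smul_comm]
  rw [← sub_eq_zero, ← sub_smul] at h
  exact (eq_zero_or_eq_zero_of_smul_eq_zero h).resolve_left (sub_ne_zero.mpr (hθ.ne hrs))

end OrthogonalIdempotents

namespace CompleteOrthogonalIdempotents

variable {ι R K : Type*} [Fintype ι] [DecidableEq ι] [Ring R] [CommRing K] [Algebra K R]
  [NoZeroSMulDivisors K R] {E : ι → R}

theorem sum_mul_mul_self_of_commute (hE : CompleteOrthogonalIdempotents E) {θ : ι → K}
    (hθ : Function.Injective θ) {N : R} (hN : Commute (∑ s, θ s • E s) N) :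
    ∑ r, E r * N * E r = N := by
  calc ∑ r, E r * N * E r = ∑ r, ∑ s, E r * N * E s := by
        refine Finset.sum_congr rfl fun r _ =>
          (Fintype.sum_eq_single (f := (E r * N * E ·)) r ?_).symm
        exact fun s hsr => hE.toOrthogonalIdempotents.mul_mul_eq_zero_of_commute hθ hN hsr.symm
    _ = (∑ r, E r) * N * ∑ s, E s := by
        rw [Finset.sum_mul, Finset.sum_mul]
        simp only [Finset.mul_sum]
    _ = N := by rw [hE.complete, one_mul, mul_one]

end CompleteOrthogonalIdempotents

theorem LinearMap.IsSymmetric.mem_range_iff {𝕜 F : Type*} [RCLike 𝕜] [NormedAddCommGroup F]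
    [InnerProductSpace 𝕜 F] [FiniteDimensional 𝕜 F] {T : F →ₗ[𝕜] F} (hT : T.IsSymmetric)
    {w : F} : w ∈ LinearMap.range T ↔ ∀ v, T v = 0 → inner 𝕜 v w = 0 := by
  rw [← (LinearMap.range T).orthogonal_orthogonal, hT.orthogonal_range, Submodule.mem_orthogonal]
  simp only [LinearMap.mem_ker]

theorem Matrix.IsHermitian.exists_mulVec_eq {𝕜 m : Type*} [RCLike 𝕜] [Fintype m] [DecidableEq m]
    {B : Matrix m m 𝕜} (hB : B.IsHermitian) {w : m → 𝕜}
    (hw : ∀ v, B *ᵥ v = 0 → w ⬝ᵥ star v = 0) : ∃ v, B *ᵥ v = w := by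
  obtain ⟨v, hv⟩ :=
    ((isSymmetric_toEuclideanLin_iff.mpr hB).mem_range_iff (w := WithLp.toLp 2 w)).mpr
      fun v hv => hw v.ofLp (by simpa using congrArg WithLp.ofLp hv)
  exact ⟨v.ofLp, by simpa using congrArg WithLp.ofLp hv⟩

theorem Matrix.trace_transpose_mul_of_isDiag {m R : Type*} [Fintype m] [CommSemiring R]
    {D : Matrix m m R} (hD : D.IsDiag) (N : Matrix m m R) : (Dᵀ * N).trace = D.diag ⬝ᵥ N.diag := by
  classical
  rw [← hD.diagonal_diag, diagonal_transpose, diag_diagonal]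
  simp [trace, dotProduct, diagonal_mul]

section Psi

variable {n d : ℕ} {E : Fin d → Matrix (Fin n) (Fin n) ℝ}

theorem transpose_Psi (hEsymm : ∀ r, (E r)ᵀ = E r) (X : Matrix (Fin n) (Fin n) ℝ) :
    (Psi E X)ᵀ = Psi E Xᵀ := by
  simp only [Psi, transpose_sum, transpose_mul, hEsymm, mul_assoc]

theorem trace_transpose_Psi_mul (hEsymm : ∀ r, (E r)ᵀ = E r) (X Y : Matrix (Fin n) (Fin n) ℝ) :
    ((Psi E X)ᵀ * Y).trace = (Xᵀ * Psi E Y).trace := by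
  rw [transpose_Psi hEsymm, Psi, Psi, Finset.sum_mul, Finset.mul_sum, trace_sum, trace_sum]
  refine Finset.sum_congr rfl fun r _ => ?_
  rw [mul_assoc, trace_mul_comm, ← mul_assoc, trace_mul_comm]

theorem Psi_Psi (hE : OrthogonalIdempotents E) (X : Matrix (Fin n) (Fin n) ℝ) :
    Psi E (Psi E X) = Psi E X :=
  hE.sum_mul_mul_self_idempotent X

theorem diag_Psi_diagonal (hEsymm : ∀ r, (E r)ᵀ = E r) (v : Fin n → ℝ) :
    (Psi E (diagonal v)).diag = (∑ r, E r ⊙ E r) *ᵥ v := by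
  ext i
  simp only [Psi, diag_apply, Matrix.sum_apply, mul_apply (M := E _ * diagonal v), mul_diagonal,
    mulVec, dotProduct, hadamard_apply, Finset.sum_mul]
  rw [Finset.sum_comm]
  refine Finset.sum_congr rfl fun j _ => Finset.sum_congr rfl fun r _ => ?_
  rw [← hEsymm r, transpose_apply, hEsymm]
  ring

theorem exists_diag_Psi_diagonal_eq (hEsymm : ∀ r, (E r)ᵀ = E r) (hE : OrthogonalIdempotents E)
    {M : Matrix (Fin n) (Fin n) ℝ} (hM : Psi E M = M) :
    ∃ v, (Psi E (diagonal v)).diag = M.diag := by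
  have hB : (∑ r, E r ⊙ E r).IsHermitian := by
    rw [IsHermitian, conjTranspose_eq_transpose_of_trivial, transpose_sum]
    simp only [transpose_hadamard, hEsymm]
  suffices hM0 : ∀ u, (∑ r, E r ⊙ E r) *ᵥ u = 0 → M.diag ⬝ᵥ star u = 0 by
    obtain ⟨v, hv⟩ := hB.exists_mulVec_eq hM0
    exact ⟨v, by rw [diag_Psi_diagonal hEsymm, hv]⟩
  intro u hu
  have hPsi : Psi E (diagonal u) = 0 := by
    rw [← trace_conjTranspose_mul_self_eq_zero_iff, conjTranspose_eq_transpose_of_trivial,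
      trace_transpose_Psi_mul hEsymm, Psi_Psi hE, trace_transpose_mul_of_isDiag (isDiag_diagonal u),
      diag_Psi_diagonal hEsymm, hu, dotProduct_zero]
  calc M.diag ⬝ᵥ star u = ((diagonal u)ᵀ * M).trace := by
        rw [star_trivial, trace_transpose_mul_of_isDiag (isDiag_diagonal u), diag_diagonal,
          dotProduct_comm]
    _ = ((Psi E (diagonal u))ᵀ * M).trace := by rw [trace_transpose_Psi_mul hEsymm, hM]
    _ = 0 := by rw [hPsi, transpose_zero, zero_mul, trace_zero]

end Psi

theorem commutant_decomposition_general (n d : ℕ)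
    (A : Matrix (Fin n) (Fin n) ℝ)
    (θ : Fin d → ℝ) (hθ : Function.Injective θ)
    (E : Fin d → Matrix (Fin n) (Fin n) ℝ)
    (hEsymm : ∀ r, (E r)ᵀ = E r)
    (hEidem : ∀ r, E r * E r = E r)
    (hEorth : ∀ r s, r ≠ s → E r * E s = 0)
    (hEsum : ∑ r, E r = 1)
    (hdecomp : A = ∑ r, θ r • E r) :
    (∀ N : Matrix (Fin n) (Fin n) ℝ,
        (∃ D, D.IsDiag ∧ Psi E D = N) →
        (A * N = N * A ∧ ∀ i, N i i = 0) → N = 0) ∧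
      (∀ M : Matrix (Fin n) (Fin n) ℝ, A * M = M * A →
        ∃ D N, D.IsDiag ∧ (A * N = N * A ∧ ∀ i, N i i = 0) ∧ M = Psi E D + N) ∧
      (∀ D N : Matrix (Fin n) (Fin n) ℝ, D.IsDiag →
        (A * N = N * A ∧ ∀ i, N i i = 0) → ((Psi E D)ᵀ * N).trace = 0) := by
  subst hdecomp
  have hE : CompleteOrthogonalIdempotents E := ⟨⟨hEidem, hEorth⟩, hEsum⟩
  have hfix : ∀ N, (∑ r, θ r • E r) * N = N * (∑ r, θ r • E r) → Psi E N = N :=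
    fun N hN => hE.sum_mul_mul_self_of_commute hθ hN
  have horth : ∀ D N : Matrix (Fin n) (Fin n) ℝ, D.IsDiag →
      ((∑ r, θ r • E r) * N = N * (∑ r, θ r • E r) ∧ ∀ i, N i i = 0) →
      ((Psi E D)ᵀ * N).trace = 0 := by
    rintro D N hD ⟨hN, hNdiag⟩
    rw [trace_transpose_Psi_mul hEsymm, hfix N hN, trace_transpose_mul_of_isDiag hD,
      show N.diag = 0 from funext hNdiag, dotProduct_zero]
  refine ⟨?_, fun M hM => ?_, horth⟩
  · rintro N ⟨D, hD, rfl⟩ hN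
    exact trace_conjTranspose_mul_self_eq_zero_iff.mp (horth D _ hD hN)
  obtain ⟨v, hv⟩ := exists_diag_Psi_diagonal_eq hEsymm hE.toOrthogonalIdempotents (hfix M hM)
  refine ⟨diagonal v, M - Psi E (diagonal v), isDiag_diagonal v, ⟨?_, fun i => ?_⟩, by abel⟩
  · exact Commute.sub_right hM (hE.toOrthogonalIdempotents.commute_sum_smul_sum_mul_mul_self θ _)
  · simpa [sub_eq_zero] using (congrFun hv i).symm

/-- The commutant of `A` decomposes as the orthogonal direct sum `Ψ(𝒟) ⊕ 𝒜₀`, where `𝒟`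
is the space of diagonal matrices and `𝒜₀` is the space of matrices commuting with `A`
with zero diagonal: the two pieces intersect trivially, every matrix commuting with `A`
is a sum of an element of each, and the two pieces are orthogonal with respect to the
trace inner product. -/
theorem commutant_decomposition (n d : ℕ) (hn : 1 ≤ n)
    (A : Matrix (Fin n) (Fin n) ℝ) (hA : Aᵀ = A)
    (θ : Fin d → ℝ) (hθ : Function.Injective θ)
    (E : Fin d → Matrix (Fin n) (Fin n) ℝ)
    (hEsymm : ∀ r, (E r)ᵀ = E r)
    (hEidem : ∀ r, E r * E r = E r)
    (hEorth : ∀ r s, r ≠ s → E r * E s = 0)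
    (hEsum : ∑ r, E r = 1)
    (hdecomp : A = ∑ r, θ r • E r) :
    (∀ N : Matrix (Fin n) (Fin n) ℝ,
        (∃ D, D.IsDiag ∧ Psi E D = N) →
        (A * N = N * A ∧ ∀ i, N i i = 0) → N = 0) ∧
      (∀ M : Matrix (Fin n) (Fin n) ℝ, A * M = M * A →
        ∃ D N, D.IsDiag ∧ (A * N = N * A ∧ ∀ i, N i i = 0) ∧ M = Psi E D + N) ∧
      (∀ D N : Matrix (Fin n) (Fin n) ℝ, D.IsDiag →
        (A * N = N * A ∧ ∀ i, N i i = 0) → ((Psi E D)ᵀ * N).trace = 0) :=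
  commutant_decomposition_general n d A θ hθ E hEsymm hEidem hEorth hEsum hdecomp
end

section
/- Let X be a graph on n ≥ 2 vertices whose adjacency matrix A has n distinct (i.e., all simple) eigenvalues. Then the rank of the average mixing matrix of X is at most n − 1. -/
open Matrix BigOperators

-- Auxiliary: a matrix of rank at most one has vanishing 2x2 minors.
lemma rank_one_cross {n : ℕ} (M : Matrix (Fin n) (Fin n) ℝ) (h : M.rank ≤ 1) :
    ∀ i j k l, M i j * M k l = M i l * M k j := by
  have hfr : Module.finrank ℝ ↥(LinearMap.range M.mulVecLin) ≤ 1 := h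
  rw [Submodule.finrank_le_one_iff_isPrincipal] at hfr
  obtain ⟨v, hv⟩ := hfr
  have hcol : ∀ j : Fin n, ∃ c : ℝ, ∀ i, M i j = c * v i := by
    intro j
    have hmem : M.mulVec (Pi.single j 1) ∈ LinearMap.range M.mulVecLin :=
      ⟨Pi.single j 1, rfl⟩
    rw [hv, Submodule.mem_span_singleton] at hmem
    obtain ⟨c, hc⟩ := hmem
    refine ⟨c, fun i => ?_⟩
    have := congrFun hc i
    simpa [Matrix.mulVec_single] using this.symm
  intro i j k l
  obtain ⟨c, hc⟩ := hcol j
  obtain ⟨d, hd⟩ := hcol l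
  rw [hc, hd, hd, hc]; ring

/-- If `X` is a graph on `n ≥ 2` vertices whose adjacency matrix has all simple
eigenvalues, then the rank of its average mixing matrix `∑ r, E r ⊙ E r` is at most
`n - 1`. -/
theorem rank_avg_mixing_le_of_simple_eigenvalues (n : ℕ) (hn : 2 ≤ n)
    (G : SimpleGraph (Fin n)) [DecidableRel G.Adj]
    (θ : Fin n → ℝ) (hθ : Function.Injective θ)
    (E : Fin n → Matrix (Fin n) (Fin n) ℝ)
    (hEsymm : ∀ r, (E r)ᵀ = E r)
    (hEidem : ∀ r, E r * E r = E r)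
    (hEorth : ∀ r s, r ≠ s → E r * E s = 0)
    (hEsum : ∑ r, E r = 1)
    (hErank : ∀ r, (E r).rank = 1)
    (hdecomp : G.adjMatrix ℝ = ∑ r, θ r • E r) :
    (∑ r, E r ⊙ E r).rank ≤ n - 1 := by
  -- Key entrywise identity: (E r u v)^2 = E r u u * E r v v
  have key : ∀ r u v, E r u v * E r u v = E r u u * E r v v := by
    intro r u v
    have h1 := rank_one_cross (E r) (le_of_eq (hErank r)) u v v u
    have hsym : E r v u = E r u v :=
      congrFun (congrFun ((hEsymm r).symm) v) u
    rw [hsym] at h1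
    linarith [h1]
  -- B with B u r = E r u u
  set B : Matrix (Fin n) (Fin n) ℝ := Matrix.of (fun u r => E r u u) with hB
  have hM : (∑ r, E r ⊙ E r) = B * Bᵀ := by
    ext u v
    simp only [Matrix.sum_apply, Matrix.hadamard_apply, Matrix.mul_apply,
      Matrix.transpose_apply, hB, Matrix.of_apply]
    exact Finset.sum_congr rfl fun r _ => key r u v
  rw [hM]
  refine le_trans (Matrix.rank_mul_le_left B Bᵀ) ?_
  -- θ is a nonzero kernel vector of B
  have hθ0 : θ ≠ 0 := by
    intro h
    have h01 : (⟨0, by omega⟩ : Fin n) = ⟨1, by omega⟩ :=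
      hθ (by rw [h]; rfl)
    simp at h01
  have hker : B.mulVec θ = 0 := by
    funext u
    have hdiag : (G.adjMatrix ℝ) u u = 0 := by simp
    rw [hdecomp] at hdiag
    simp only [Matrix.sum_apply, Matrix.smul_apply, smul_eq_mul] at hdiag
    simp only [Matrix.mulVec, dotProduct, hB, Matrix.of_apply, Pi.zero_apply]
    rw [← hdiag]
    exact Finset.sum_congr rfl fun r _ => mul_comm _ _
  have hkerne : LinearMap.ker B.mulVecLin ≠ ⊥ := by
    intro h
    have : θ ∈ LinearMap.ker B.mulVecLin := by
      simpa [LinearMap.mem_ker] using hker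
    rw [h, Submodule.mem_bot] at this
    exact hθ0 this
  have hpos : 0 < Module.finrank ℝ ↥(LinearMap.ker B.mulVecLin) := by
    rcases (Submodule.ne_bot_iff _).mp hkerne with ⟨x, hx, hx0⟩
    exact Module.finrank_pos_iff_exists_ne_zero.mpr ⟨⟨x, hx⟩, by simpa using hx0⟩
  have hrn : B.rank + Module.finrank ℝ ↥(LinearMap.ker B.mulVecLin) = n := by
    have := LinearMap.finrank_range_add_finrank_ker B.mulVecLin
    simpa [Matrix.rank] using this
  omega
end

section
/- Let X be a k-regular graph on n ≥ 4 vertices whose adjacency matrix A has n distinct (i.e., all simple) eigenvalues. Then the rank of the average mixing matrix of X is at most n − 3. -/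
open Matrix BigOperators

lemma aux_rank_one_outer {n : ℕ} (M : Matrix (Fin n) (Fin n) ℝ) (h : M.rank ≤ 1) :
    ∃ v g : Fin n → ℝ, ∀ i j, M i j = v i * g j := by
  have h1 : Module.finrank ℝ (LinearMap.range M.mulVecLin) ≤ 1 := h
  rw [Submodule.finrank_le_one_iff_isPrincipal] at h1
  obtain ⟨v, hv⟩ := h1.principal
  have hcol : ∀ j, ∃ c : ℝ, ∀ i, M i j = c * v i := by
    intro j
    have hmem : M.mulVec (Pi.single j 1) ∈ LinearMap.range M.mulVecLin :=
      ⟨Pi.single j 1, rfl⟩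
    rw [hv, Submodule.mem_span_singleton] at hmem
    obtain ⟨c, hc⟩ := hmem
    refine ⟨c, fun i => ?_⟩
    have := congrFun hc i
    simpa [Matrix.mulVec_single] using this.symm
  choose g hg using hcol
  exact ⟨v, g, fun i j => by rw [hg j i, mul_comm]⟩

lemma aux_minor {n : ℕ} (M : Matrix (Fin n) (Fin n) ℝ) (hs : Mᵀ = M) (h : M.rank ≤ 1) :
    ∀ a b c d, M a b * M c d = M a c * M b d := by
  obtain ⟨v, g, hvg⟩ := aux_rank_one_outer M h
  intro a b c d
  have hsym : v c * g b = v b * g c := by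
    have h1 := congrFun (congrFun hs b) c
    simpa [Matrix.transpose_apply, hvg] using h1
  simp only [hvg]
  linear_combination (v a * g d) * hsym

lemma aux_sum_dot {n : ℕ} {ι : Type*} (s : Finset ι) (v : ι → (Fin n → ℝ)) (w : Fin n → ℝ) :
    (∑ r ∈ s, v r) ⬝ᵥ w = ∑ r ∈ s, v r ⬝ᵥ w := by
  induction s using Finset.cons_induction with
  | empty => simp
  | cons a s ha ih => simp [Finset.sum_cons, add_dotProduct, ih]

lemma aux_sum_mulVec {m n : ℕ} {ι : Type*} (s : Finset ι) (M : ι → Matrix (Fin m) (Fin n) ℝ)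
    (x : Fin n → ℝ) : (∑ r ∈ s, M r) *ᵥ x = ∑ r ∈ s, M r *ᵥ x := by
  induction s using Finset.cons_induction with
  | empty => simp
  | cons a s ha ih => simp [Finset.sum_cons, Matrix.add_mulVec, ih]

/-- If `X` is a `k`-regular graph on `n ≥ 4` vertices whose adjacency matrix has all
simple eigenvalues, then the rank of its average mixing matrix `∑ r, E r ⊙ E r` is at
most `n - 3`. -/
theorem rank_avg_mixing_le_of_regular_simple_eigenvalues (n k : ℕ) (hn : 4 ≤ n)
    (G : SimpleGraph (Fin n)) [DecidableRel G.Adj]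
    (hreg : G.IsRegularOfDegree k)
    (θ : Fin n → ℝ) (hθ : Function.Injective θ)
    (E : Fin n → Matrix (Fin n) (Fin n) ℝ)
    (hEsymm : ∀ r, (E r)ᵀ = E r)
    (hEidem : ∀ r, E r * E r = E r)
    (hEorth : ∀ r s, r ≠ s → E r * E s = 0)
    (hEsum : ∑ r, E r = 1)
    (hErank : ∀ r, (E r).rank = 1)
    (hdecomp : G.adjMatrix ℝ = ∑ r, θ r • E r) :
    (∑ r, E r ⊙ E r).rank ≤ n - 3 := by
  have hminor : ∀ r a b c d, E r a b * E r c d = E r a c * E r b d :=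
    fun r => aux_minor (E r) (hEsymm r) (le_of_eq (hErank r))
  -- the all-ones vector
  set one : Fin n → ℝ := fun _ => 1 with hone
  set u : Fin n → (Fin n → ℝ) := fun r => E r *ᵥ one with hu
  have hu_sum : ∑ r, u r = one := by
    have := congrArg (· *ᵥ one) hEsum
    simpa [aux_sum_mulVec, Matrix.one_mulVec] using this
  -- orthogonality of the u r
  have horth : ∀ r s, r ≠ s → u r ⬝ᵥ u s = 0 := by
    intro r s hrs
    show u r ⬝ᵥ (E s *ᵥ one) = 0
    rw [Matrix.dotProduct_mulVec]
    show (E r *ᵥ one) ᵥ* E s ⬝ᵥ one = 0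
    rw [Matrix.vecMul_mulVec, hEsymm, hEorth r s hrs]
    simp
  -- A *ᵥ one = k • one
  have hAone : G.adjMatrix ℝ *ᵥ one = (k : ℝ) • one := by
    funext i
    have := SimpleGraph.adjMatrix_mulVec_const_apply_of_regular (a := (1:ℝ)) hreg (v := i)
    simpa [Function.const, hone] using this
  have hsum_smul : ∑ r, θ r • u r = (k : ℝ) • one := by
    rw [← hAone, hdecomp, aux_sum_mulVec]
    exact Finset.sum_congr rfl fun r _ => (Matrix.smul_mulVec (θ r) (E r) one).symm
  have hzero : ∑ r, (θ r - k) • u r = 0 := by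
    simp only [sub_smul, Finset.sum_sub_distrib, hsum_smul, ← Finset.smul_sum, hu_sum,
      sub_self]
  have heach : ∀ s, (θ s - k) * (u s ⬝ᵥ u s) = 0 := by
    intro s
    have h1 := congrArg (· ⬝ᵥ u s) hzero
    simp only [zero_dotProduct] at h1
    rw [aux_sum_dot] at h1
    rw [Finset.sum_eq_single s] at h1
    · simpa [smul_dotProduct, smul_eq_mul] using h1
    · intro r _ hrs
      simp [smul_dotProduct, horth r s hrs]
    · simp
  -- find r0 with u r0 ≠ 0
  have hex : ∃ r, u r ≠ 0 := by
    by_contra h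
    push_neg at h
    have : (one : Fin n → ℝ) = 0 := by
      rw [← hu_sum]; exact Finset.sum_eq_zero fun r _ => h r
    have := congrFun this ⟨0, by omega⟩
    simp [hone] at this
  obtain ⟨r0, hr0⟩ := hex
  have hθr0 : θ r0 = k := by
    have h1 := heach r0
    have h2 : u r0 ⬝ᵥ u r0 ≠ 0 := fun h => hr0 (dotProduct_self_eq_zero.mp h)
    have := mul_eq_zero.mp h1
    rcases this with h | h
    · linarith [sub_eq_zero.mp h]
    · exact absurd h h2
  have hur : ∀ r, r ≠ r0 → u r = 0 := by
    intro r hr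
    have h1 := heach r
    rcases mul_eq_zero.mp h1 with h | h
    · exact absurd (hθ (by rw [sub_eq_zero.mp h, hθr0])) hr
    · exact dotProduct_self_eq_zero.mp h
  have hur0 : u r0 = one := by
    rw [← hu_sum]
    rw [Finset.sum_eq_single r0]
    · intro r _ hr; exact hur r hr
    · simp
  -- diagonal of E r0
  have hrowsum : ∀ r i, ∑ j, E r i j = u r i := by
    intro r i
    simp [hu, Matrix.mulVec, dotProduct, hone]
  have hdiag : ∀ i, (n : ℝ) * E r0 i i = 1 := by
    intro i
    have h1 : ∀ j, ∑ l, E r0 j l = 1 := by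
      intro j; rw [hrowsum, hur0]
    have h2 : (1 : ℝ) = ∑ j, ∑ l, E r0 i j * E r0 i l := by
      rw [← Finset.sum_mul_sum]
      rw [h1 i]; ring
    have h3 : ∑ j, ∑ l, E r0 i j * E r0 i l = ∑ j, ∑ l, E r0 i i * E r0 j l := by
      refine Finset.sum_congr rfl fun j _ => Finset.sum_congr rfl fun l _ => ?_
      exact hminor r0 i j i l
    rw [h3] at h2
    have h4 : ∑ j, ∑ l, E r0 i i * E r0 j l = E r0 i i * (n : ℝ) := by
      simp only [← Finset.mul_sum]
      congr 1
      calc ∑ j, ∑ l, E r0 j l = ∑ j : Fin n, (1:ℝ) := Finset.sum_congr rfl fun j _ => h1 j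
        _ = n := by simp
    rw [h4] at h2
    linarith
  -- the matrix W
  set W : Matrix (Fin n) (Fin n) ℝ := Matrix.of (fun i r => E r i i) with hW
  have hMW : ∑ r, E r ⊙ E r = W * Wᵀ := by
    funext i j
    rw [Matrix.sum_apply, Matrix.mul_apply]
    refine Finset.sum_congr rfl fun r _ => ?_
    simp only [Matrix.hadamard_apply, hW, Matrix.of_apply, Matrix.transpose_apply]
    exact hminor r i i j j ▸ (hminor r i j i j).symm ▸ rfl
  -- diagonal sums
  have hdsum : ∀ i, ∑ r, E r i i = 1 := by
    intro i
    have := congrFun (congrFun hEsum i) i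
    rw [Matrix.sum_apply] at this
    simpa using this
  -- A^2
  have hA2 : G.adjMatrix ℝ * G.adjMatrix ℝ = ∑ r, (θ r ^ 2) • E r := by
    rw [hdecomp, Finset.sum_mul_sum]
    refine Finset.sum_congr rfl fun r _ => ?_
    rw [Finset.sum_eq_single r]
    · rw [Matrix.smul_mul, Matrix.mul_smul, hEidem r, smul_smul]; ring_nf
    · intro s _ hsr
      rw [Matrix.smul_mul, Matrix.mul_smul, hEorth r s (fun h => hsr h.symm)]
      simp
    · simp
  -- kernel vectors
  set c1 : Fin n → ℝ := θ with hc1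
  set c2 : Fin n → ℝ := fun r => θ r ^ 2 - k with hc2
  set c3 : Fin n → ℝ := fun r => (if r = r0 then (n : ℝ) else 0) - 1 with hc3
  have hker1 : W *ᵥ c1 = 0 := by
    funext i
    have hAii : G.adjMatrix ℝ i i = 0 := by simp
    have := congrFun (congrFun hdecomp i) i
    rw [Matrix.sum_apply] at this
    rw [hAii] at this
    simp only [Matrix.smul_apply, smul_eq_mul] at this
    simp only [Matrix.mulVec, dotProduct, hW, Matrix.of_apply, hc1, Pi.zero_apply]
    calc ∑ r, E r i i * θ r = ∑ r, θ r * E r i i := Finset.sum_congr rfl fun r _ => mul_comm _ _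
      _ = 0 := this.symm
  have hker2 : W *ᵥ c2 = 0 := by
    funext i
    have hA2ii : (G.adjMatrix ℝ * G.adjMatrix ℝ) i i = (k : ℝ) := by
      rw [SimpleGraph.adjMatrix_mul_self_apply_self]
      rw [hreg i]
    have h1 := congrFun (congrFun hA2 i) i
    rw [Matrix.sum_apply, hA2ii] at h1
    simp only [Matrix.smul_apply, smul_eq_mul] at h1
    simp only [Matrix.mulVec, dotProduct, hW, Matrix.of_apply, hc2, Pi.zero_apply]
    have : ∑ r, E r i i * (θ r ^ 2 - ↑k) = ∑ r, θ r ^ 2 * E r i i - ↑k * ∑ r, E r i i := by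
      rw [Finset.mul_sum, ← Finset.sum_sub_distrib]
      exact Finset.sum_congr rfl fun r _ => by ring
    rw [this, ← h1, hdsum i]; ring
  have hker3 : W *ᵥ c3 = 0 := by
    funext i
    simp only [Matrix.mulVec, dotProduct, hW, Matrix.of_apply, hc3, Pi.zero_apply]
    have : ∑ r, E r i i * ((if r = r0 then (n : ℝ) else 0) - 1)
        = (∑ r, if r = r0 then E r i i * n else 0) - ∑ r, E r i i := by
      rw [← Finset.sum_sub_distrib]
      refine Finset.sum_congr rfl fun r _ => ?_
      by_cases h : r = r0 <;> simp [h] <;> ring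
    rw [this, Finset.sum_ite_eq' Finset.univ r0 (fun r => E r i i * n), hdsum i]
    simp only [Finset.mem_univ, if_true]
    rw [mul_comm, hdiag i]; ring
  -- three distinct indices different from r0
  have hget : ∀ (s : Finset (Fin n)), s.card ≤ 3 → ∃ x, x ∉ s := by
    intro s hs
    have : (sᶜ).Nonempty := by
      rw [← Finset.card_pos, Finset.card_compl]
      simp only [Fintype.card_fin]
      omega
    obtain ⟨x, hx⟩ := this
    exact ⟨x, Finset.mem_compl.mp hx⟩
  obtain ⟨a, ha⟩ := hget {r0} (by simp)
  obtain ⟨b, hb⟩ := hget {r0, a} (le_trans (Finset.card_insert_le _ _) (by simp))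
  obtain ⟨c, hc⟩ := hget {r0, a, b}
    (le_trans (Finset.card_insert_le _ _) (by
      have := Finset.card_insert_le a ({b} : Finset (Fin n)); simp at this ⊢; omega))
  simp only [Finset.mem_insert, Finset.mem_singleton, not_or] at ha hb hc
  -- linear independence of c1 c2 c3
  have hli : LinearIndependent ℝ ![c1, c2, c3] := by
    rw [Fintype.linearIndependent_iff]
    intro g hg
    have hgr : ∀ r : Fin n, g 0 * θ r + g 1 * (θ r ^ 2 - k)
        + g 2 * ((if r = r0 then (n : ℝ) else 0) - 1) = 0 := by
      intro r
      have := congrFun hg r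
      simpa [Fin.sum_univ_three, hc1, hc2, hc3, mul_comm] using this
    have hθne : ∀ x y : Fin n, x ≠ y → θ x - θ y ≠ 0 := by
      intro x y hxy h
      exact hxy (hθ (sub_eq_zero.mp h))
    have ea := hgr a; have eb := hgr b; have ec := hgr c
    rw [if_neg ha] at ea
    rw [if_neg hb.1] at eb
    rw [if_neg hc.1] at ec
    have e1 : g 1 * (θ a + θ b) + g 0 = 0 := by
      have h0 : (θ a - θ b) * (g 1 * (θ a + θ b) + g 0) = 0 := by linear_combination ea - eb
      rcases mul_eq_zero.mp h0 with h | h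
      · exact absurd h (hθne a b (fun h' => hb.2 h'.symm))
      · exact h
    have e2 : g 1 * (θ b + θ c) + g 0 = 0 := by
      have h0 : (θ b - θ c) * (g 1 * (θ b + θ c) + g 0) = 0 := by linear_combination eb - ec
      rcases mul_eq_zero.mp h0 with h | h
      · exact absurd h (hθne b c (fun h' => hc.2.2 h'.symm))
      · exact h
    have hg1 : g 1 = 0 := by
      have h0 : g 1 * (θ a - θ c) = 0 := by linear_combination e1 - e2
      rcases mul_eq_zero.mp h0 with h | h
      · exact h
      · exact absurd h (hθne a c (fun h' => hc.2.1 h'.symm))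
    have hg0 : g 0 = 0 := by rw [hg1] at e1; linarith
    have hg2 : g 2 = 0 := by rw [hg0, hg1] at ea; linarith
    intro i
    fin_cases i <;> assumption
  -- kernel dimension
  have hmem : ∀ i : Fin 3, ![c1, c2, c3] i ∈ LinearMap.ker W.mulVecLin := by
    intro i
    fin_cases i <;> simp only [LinearMap.mem_ker, Matrix.mulVecLin_apply, Matrix.cons_val_zero,
      Matrix.cons_val_one, Matrix.head_cons] <;>
      [exact hker1; exact hker2; exact hker3]
  have hspan : Submodule.span ℝ (Set.range ![c1, c2, c3]) ≤ LinearMap.ker W.mulVecLin := by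
    rw [Submodule.span_le]
    rintro x ⟨i, rfl⟩
    exact hmem i
  have hker_dim : 3 ≤ Module.finrank ℝ (LinearMap.ker W.mulVecLin) := by
    have h1 : Module.finrank ℝ (Submodule.span ℝ (Set.range ![c1, c2, c3])) = 3 := by
      rw [finrank_span_eq_card hli]
      simp
    rw [← h1]
    exact Submodule.finrank_mono hspan
  have hrn := LinearMap.finrank_range_add_finrank_ker W.mulVecLin
  have hfr : Module.finrank ℝ (Fin n → ℝ) = n := by simp
  rw [hfr] at hrn
  have hrankW : W.rank ≤ n - 3 := by
    have : W.rank = Module.finrank ℝ (LinearMap.range W.mulVecLin) := rfl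
    omega
  calc (∑ r, E r ⊙ E r).rank = (W * Wᵀ).rank := by rw [hMW]
    _ ≤ W.rank := Matrix.rank_mul_le_left W Wᵀ
    _ ≤ n - 3 := hrankW
end

section
/- Let X be a bipartite graph on n vertices whose adjacency matrix A has n distinct (i.e., all simple) eigenvalues. Then the rank of the average mixing matrix of X is at most ⌊(n+1)/2⌋. -/
/-!
A proper 2-colouring gives a diagonal sign matrix `D` with `D² = 1` and `DAD = -A`. Conjugation
by `D` carries the idempotent `E r` of `θ r` to an idempotent `F` with `FA = AF = -θ r • F`, so
`-θ r` is an eigenvalue, and since eigenvalues are simple, `F` is absorbed on both sides by the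
rank-one idempotent of `-θ r` and hence equals it. Thus `θ ↦ -θ` induces an involution `σ` of the
indices with at most one fixed point (the eigenvalue `0`), and as `D` has entries `±1`,
`E (σ r) ⊙ E (σ r) = E r ⊙ E r`. The average mixing matrix is therefore a sum of at most
`⌈n/2⌉` distinct Schur squares of rank-one matrices, each of rank at most one.
-/

open Matrix

namespace Matrix

variable {m n K : Type*} [Fintype n] [Field K]

theorem rank_add_le (A B : Matrix m n K) : (A + B).rank ≤ A.rank + B.rank := by
  have hrange : LinearMap.range (A + B).mulVecLin ≤
      LinearMap.range A.mulVecLin ⊔ LinearMap.range B.mulVecLin := by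
    rw [mulVecLin_add]
    exact LinearMap.range_add_le _ _
  exact (Submodule.finrank_mono hrange).trans (Submodule.finrank_add_le_finrank_add_finrank _ _)

theorem rank_finsetSum_le {ι : Type*} (s : Finset ι) (A : ι → Matrix m n K) :
    (∑ i ∈ s, A i).rank ≤ ∑ i ∈ s, (A i).rank :=
  Finset.sum_hom_rel (r := fun M k => rank M ≤ k) (le_of_eq rank_zero)
    fun _ _ _ h => (rank_add_le _ _).trans (by gcongr)

theorem rank_smul_le (c : K) (A : Matrix m n K) : (c • A).rank ≤ A.rank := by
  classical
  simpa using rank_mul_le_left A (c • (1 : Matrix n n K))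

theorem rank_sum_le_card_image {ι : Type*} [DecidableEq (Matrix m n K)] (s : Finset ι)
    (A : ι → Matrix m n K) (hA : ∀ i ∈ s, (A i).rank ≤ 1) :
    (∑ i ∈ s, A i).rank ≤ (s.image A).card := by
  rw [Finset.sum_comp (fun B => B) A, Finset.card_eq_sum_ones]
  refine (rank_finsetSum_le _ _).trans (Finset.sum_le_sum fun B hB => ?_)
  obtain ⟨i, hi, rfl⟩ := Finset.mem_image.mp hB
  rw [← Nat.cast_smul_eq_nsmul K]
  exact (rank_smul_le _ _).trans (hA i hi)

theorem exists_eq_vecMulVec_of_rank_le_one {M : Matrix m n K} (hM : M.rank ≤ 1) :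
    ∃ u v, M = vecMulVec u v := by
  classical
  obtain ⟨⟨w, _⟩, hw⟩ := finrank_le_one_iff.mp hM
  choose c hc using fun j =>
    hw ⟨M.col j, by simpa using M.mulVecLin.mem_range_self (Pi.single j 1)⟩
  refine ⟨w, c, ext fun i j => ?_⟩
  simpa [vecMulVec_apply, mul_comm] using (congrFun (congrArg Subtype.val (hc j)) i).symm

theorem rank_hadamard_le_one {A B : Matrix m n K} (hA : A.rank ≤ 1) (hB : B.rank ≤ 1) :
    (A ⊙ B).rank ≤ 1 := by
  obtain ⟨u, v, rfl⟩ := exists_eq_vecMulVec_of_rank_le_one hA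
  obtain ⟨u', v', rfl⟩ := exists_eq_vecMulVec_of_rank_le_one hB
  have : vecMulVec u v ⊙ vecMulVec u' v' = vecMulVec (u * u') (v * v') := by
    ext i j
    simp only [hadamard_apply, vecMulVec_apply, Pi.mul_apply]
    ring
  exact this ▸ rank_vecMulVec_le _ _

theorem exists_mul_mul_eq_smul_of_rank_le_one [Fintype m] {P : Matrix m m K} (hP : P.rank ≤ 1)
    (X : Matrix m m K) : ∃ c : K, P * X * P = c • P := by
  obtain ⟨u, v, rfl⟩ := exists_eq_vecMulVec_of_rank_le_one hP
  exact ⟨(v ᵥ* X) ⬝ᵥ u, by rw [vecMulVec_mul, vecMulVec_mul_vecMulVec, vecMulVec_smul]⟩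

end Matrix

theorem IsIdempotentElem.eq_of_mul_eq_of_rank_le_one {m K : Type*} [Fintype m] [Field K]
    {P F : Matrix m m K} (hP : IsIdempotentElem P) (hF : IsIdempotentElem F)
    (hrank : P.rank ≤ 1) (hF0 : F ≠ 0) (hPF : P * F = F) (hFP : F * P = F) : F = P := by
  obtain ⟨c, hc⟩ := exists_mul_mul_eq_smul_of_rank_le_one hrank F
  have hFc : F = c • P := by rw [← hc, hPF, hFP]
  have hc0 : c ≠ 0 := by rintro rfl; exact hF0 (by simpa using hFc)
  have hP0 : P ≠ 0 := by rintro rfl; exact hF0 (by simpa using hFc)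
  have hcc : (c * c - c) • P = 0 := by
    have := hF.eq
    rwa [hFc, smul_mul_smul_comm, hP.eq, ← sub_eq_zero, ← sub_smul] at this
  have hc1 : c = 1 :=
    mul_left_cancel₀ hc0 (by linear_combination (smul_eq_zero.mp hcc).resolve_right hP0)
  rw [hFc, hc1, one_smul]

open Function in
theorem Function.Involutive.card_image_le_of_subsingleton_fixedPoints {α β : Type*} [Fintype α]
    [LinearOrder α] [DecidableEq β] {σ : α → α} (hσ : Involutive σ)
    (hfix : (fixedPoints σ).Subsingleton) {f : α → β} (hf : ∀ a, f (σ a) = f a) :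
    (Finset.univ.image f).card ≤ (Fintype.card α + 1) / 2 := by
  classical
  set S := Finset.univ.filter fun a => a ≤ σ a
  have hcover : S ∪ S.image σ = Finset.univ := by
    refine Finset.eq_univ_of_forall fun a => ?_
    by_cases ha : a ≤ σ a
    · simp [S, ha]
    · refine Finset.mem_union_right _ (Finset.mem_image.mpr ⟨σ a, ?_, hσ a⟩)
      simpa [S, hσ a] using (not_le.mp ha).le
  have hinter : ∀ a ∈ S ∩ S.image σ, a ∈ fixedPoints σ := by
    intro a ha
    simp only [S, Finset.mem_inter, Finset.mem_filter, Finset.mem_image, Finset.mem_univ,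
      true_and] at ha
    obtain ⟨hle, b, hb, rfl⟩ := ha
    rw [hσ b] at hle
    exact (hσ b).trans (le_antisymm hb hle)
  have hinter_card : (S ∩ S.image σ).card ≤ 1 :=
    Finset.card_le_one.mpr fun a ha b hb => hfix (hinter a ha) (hinter b hb)
  have hS : (Finset.univ.image f) = S.image f := by
    ext b
    simp only [Finset.mem_image, Finset.mem_univ, true_and, S, Finset.mem_filter]
    constructor
    · rintro ⟨a, rfl⟩
      by_cases ha : a ≤ σ a
      · exact ⟨a, ha, rfl⟩
      · exact ⟨σ a, by rw [hσ a]; exact (not_le.mp ha).le, hf a⟩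
    · rintro ⟨a, -, rfl⟩
      exact ⟨a, rfl⟩
  have hcard := Finset.card_union_add_card_inter S (S.image σ)
  rw [hcover, Finset.card_univ, Finset.card_image_of_injective _ hσ.injective] at hcard
  rw [hS]
  have := Finset.card_image_le (s := S) (f := f)
  omega

section Signature

variable {m R : Type*} [Fintype m] [DecidableEq m] [CommRing R] {d : m → R}

theorem Matrix.diagonal_mul_diagonal_self_of_mul_self (hd : ∀ i, d i * d i = 1) :
    diagonal d * diagonal d = 1 := by
  rw [diagonal_mul_diagonal, ← diagonal_one]
  exact congrArg diagonal (funext hd)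

theorem Matrix.hadamard_self_diagonal_mul_mul_diagonal (hd : ∀ i, d i * d i = 1)
    (M : Matrix m m R) :
    (diagonal d * M * diagonal d) ⊙ (diagonal d * M * diagonal d) = M ⊙ M := by
  ext i j
  simp only [hadamard_apply, mul_diagonal, diagonal_mul]
  linear_combination (M i j * M i j * d j * d j) * hd i + M i j * M i j * hd j

theorem SimpleGraph.diagonal_mul_adjMatrix_mul_diagonal {G : SimpleGraph m} [DecidableRel G.Adj]
    (hd : ∀ i j, G.Adj i j → d i * d j = -1) :
    diagonal d * G.adjMatrix R * diagonal d = -G.adjMatrix R := by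
  ext i j
  rw [mul_diagonal, diagonal_mul]
  by_cases hij : G.Adj i j
  · simp [hij, hd i j hij]
  · simp [hij]

end Signature

theorem SimpleGraph.Colorable.exists_sign {V : Type*} {G : SimpleGraph V} (hG : G.Colorable 2)
    (R : Type*) [Ring R] :
    ∃ d : V → R, (∀ i, d i * d i = 1) ∧ ∀ i j, G.Adj i j → d i * d j = -1 := by
  obtain ⟨C⟩ := hG
  refine ⟨fun v => if C v = 0 then 1 else -1, fun i => by dsimp only; split_ifs <;> simp,
    fun i j hij => ?_⟩
  have hC := C.valid hij
  rcases Fin.exists_fin_two.mp ⟨C i, rfl⟩ with hi | hi <;>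
    rcases Fin.exists_fin_two.mp ⟨C j, rfl⟩ with hj | hj <;> simp_all

structure Matrix.IsSpectralDecomposition {m ι K : Type*} [Fintype m] [DecidableEq m] [Fintype ι]
    [Field K] (A : Matrix m m K) (θ : ι → K) (E : ι → Matrix m m K) : Prop where
  isIdempotentElem : ∀ r, IsIdempotentElem (E r)
  mul_eq_zero : ∀ r s, r ≠ s → E r * E s = 0
  sum_eq_one : ∑ r, E r = 1
  eq_sum : A = ∑ r, θ r • E r

namespace Matrix.IsSpectralDecomposition

variable {m ι K : Type*} [Fintype m] [DecidableEq m] [Fintype ι] [Field K]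
  {A : Matrix m m K} {θ : ι → K} {E : ι → Matrix m m K}

theorem mul_idempotent_eq_smul (h : IsSpectralDecomposition A θ E) (r : ι) :
    A * E r = θ r • E r := by
  rw [h.eq_sum, Finset.sum_mul, Finset.sum_eq_single r, smul_mul_assoc, (h.isIdempotentElem r).eq]
  · intro s _ hs
    rw [smul_mul_assoc, h.mul_eq_zero s r hs, smul_zero]
  · exact absurd (Finset.mem_univ r)

theorem idempotent_mul_eq_smul (h : IsSpectralDecomposition A θ E) (r : ι) :
    E r * A = θ r • E r := by
  rw [h.eq_sum, Finset.mul_sum, Finset.sum_eq_single r, mul_smul_comm, (h.isIdempotentElem r).eq]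
  · intro s _ hs
    rw [mul_smul_comm, h.mul_eq_zero r s (Ne.symm hs), smul_zero]
  · exact absurd (Finset.mem_univ r)

theorem mul_idempotent_eq_zero (h : IsSpectralDecomposition A θ E) {X : Matrix m m K} {μ : K}
    (hX : X * A = μ • X) {s : ι} (hs : θ s ≠ μ) : X * E s = 0 := by
  have : (θ s - μ) • (X * E s) = 0 := by
    rw [sub_smul, ← mul_smul_comm, ← h.mul_idempotent_eq_smul, ← smul_mul_assoc, ← hX, mul_assoc,
      sub_self]
  exact (smul_eq_zero.mp this).resolve_left (sub_ne_zero.mpr hs)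

theorem idempotent_mul_eq_zero (h : IsSpectralDecomposition A θ E) {X : Matrix m m K} {μ : K}
    (hX : A * X = μ • X) {s : ι} (hs : θ s ≠ μ) : E s * X = 0 := by
  have : (θ s - μ) • (E s * X) = 0 := by
    rw [sub_smul, ← smul_mul_assoc, ← h.idempotent_mul_eq_smul, ← mul_smul_comm, ← hX, mul_assoc,
      sub_self]
  exact (smul_eq_zero.mp this).resolve_left (sub_ne_zero.mpr hs)

theorem exists_eigenvalue_eq_of_mul_eq_smul (h : IsSpectralDecomposition A θ E) {X : Matrix m m K}
    {μ : K} (hX : X * A = μ • X) (hX0 : X ≠ 0) :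
    ∃ s, θ s = μ := by
  by_contra! hμ
  refine hX0 ?_
  rw [← mul_one X, ← h.sum_eq_one, Finset.mul_sum]
  exact Finset.sum_eq_zero fun s _ => h.mul_idempotent_eq_zero hX (hμ s)

theorem mul_idempotent_eq_self (h : IsSpectralDecomposition A θ E) (hθ : Function.Injective θ)
    {X : Matrix m m K} {μ : K} (hX : X * A = μ • X) {s : ι} (hs : θ s = μ) : X * E s = X := by
  calc X * E s = ∑ t, X * E t :=
        (Finset.sum_eq_single s (fun t _ ht => h.mul_idempotent_eq_zero hX
          fun hθt => ht (hθ (hθt.trans hs.symm))) (absurd (Finset.mem_univ s))).symm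
    _ = X := by rw [← Finset.mul_sum, h.sum_eq_one, mul_one]

theorem idempotent_mul_eq_self (h : IsSpectralDecomposition A θ E) (hθ : Function.Injective θ)
    {X : Matrix m m K} {μ : K} (hX : A * X = μ • X) {s : ι} (hs : θ s = μ) : E s * X = X := by
  calc E s * X = ∑ t, E t * X :=
        (Finset.sum_eq_single s (fun t _ ht => h.idempotent_mul_eq_zero hX
          fun hθt => ht (hθ (hθt.trans hs.symm))) (absurd (Finset.mem_univ s))).symm
    _ = X := by rw [← Finset.sum_mul, h.sum_eq_one, one_mul]

theorem exists_conj_eq (h : IsSpectralDecomposition A θ E) (hθ : Function.Injective θ)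
    (hrank : ∀ s, (E s).rank ≤ 1) {D : Matrix m m K} (hD : D * D = 1) (hDA : D * A * D = -A)
    {r : ι} (hr : E r ≠ 0) : ∃ s, θ s = -θ r ∧ D * E r * D = E s := by
  have hDA' : D * A = -(A * D) := by
    rw [← mul_one (D * A), ← hD, ← mul_assoc, hDA, neg_mul]
  have hFA : D * E r * D * A = (-θ r) • (D * E r * D) := by
    rw [mul_assoc, hDA', mul_neg, ← mul_assoc, mul_assoc D, h.idempotent_mul_eq_smul]
    simp only [neg_smul, mul_smul_comm, smul_mul_assoc]
  have hAF : A * (D * E r * D) = (-θ r) • (D * E r * D) := by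
    rw [← mul_assoc, ← mul_assoc, ← neg_neg (A * D), ← hDA', neg_mul, neg_mul, mul_assoc D,
      h.mul_idempotent_eq_smul]
    simp only [neg_smul, mul_smul_comm, smul_mul_assoc]
  have hF : IsIdempotentElem (D * E r * D) :=
    calc D * E r * D * (D * E r * D) = D * (E r * ((D * D) * (E r * D))) := by
          simp only [mul_assoc]
      _ = D * E r * D := by
          rw [hD, one_mul, ← mul_assoc (E r), (h.isIdempotentElem r).eq, mul_assoc]
  have hF0 : D * E r * D ≠ 0 := by
    have hDFD : D * (D * E r * D) * D = E r :=
      calc _ = (D * D) * E r * (D * D) := by simp only [mul_assoc]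
        _ = E r := by rw [hD, one_mul, mul_one]
    exact fun h0 => hr (by rw [← hDFD, h0, mul_zero, zero_mul])
  obtain ⟨s, hs⟩ := h.exists_eigenvalue_eq_of_mul_eq_smul hFA hF0
  exact ⟨s, hs, (h.isIdempotentElem s).eq_of_mul_eq_of_rank_le_one hF (hrank s) hF0
    (h.idempotent_mul_eq_self hθ hAF hs) (h.mul_idempotent_eq_self hθ hFA hs)⟩

end Matrix.IsSpectralDecomposition

theorem rank_avg_mixing_le_of_bipartite_simple_eigenvalues_general (n : ℕ)
    (G : SimpleGraph (Fin n)) [DecidableRel G.Adj]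
    (hbip : G.Colorable 2)
    (θ : Fin n → ℝ) (hθ : Function.Injective θ)
    (E : Fin n → Matrix (Fin n) (Fin n) ℝ)
    (hEidem : ∀ r, E r * E r = E r)
    (hEorth : ∀ r s, r ≠ s → E r * E s = 0)
    (hEsum : ∑ r, E r = 1)
    (hErank : ∀ r, (E r).rank = 1)
    (hdecomp : G.adjMatrix ℝ = ∑ r, θ r • E r) :
    (∑ r, E r ⊙ E r).rank ≤ (n + 1) / 2 := by
  classical
  have hspec : IsSpectralDecomposition (G.adjMatrix ℝ) θ E := ⟨hEidem, hEorth, hEsum, hdecomp⟩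
  have hE0 : ∀ r, E r ≠ 0 := fun r h0 => by simpa [h0] using hErank r
  obtain ⟨d, hd, hdG⟩ := hbip.exists_sign ℝ
  choose σ hσθ hσE using fun r => hspec.exists_conj_eq hθ (fun s => (hErank s).le)
    (diagonal_mul_diagonal_self_of_mul_self hd) (G.diagonal_mul_adjMatrix_mul_diagonal hdG)
    (hE0 r)
  have hσ : Function.Involutive σ := fun r => hθ (by rw [hσθ, hσθ, neg_neg])
  have hfix : (Function.fixedPoints σ).Subsingleton := fun a ha b hb => by
    have hθa : θ a = 0 := by linarith [hσθ a, congrArg θ ha.eq]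
    have hθb : θ b = 0 := by linarith [hσθ b, congrArg θ hb.eq]
    exact hθ (hθa.trans hθb.symm)
  calc (∑ r, E r ⊙ E r).rank ≤ (Finset.univ.image fun r => E r ⊙ E r).card :=
        rank_sum_le_card_image _ _ fun r _ => rank_hadamard_le_one (hErank r).le (hErank r).le
    _ ≤ (Fintype.card (Fin n) + 1) / 2 :=
        hσ.card_image_le_of_subsingleton_fixedPoints hfix fun r => by
          rw [← hσE, hadamard_self_diagonal_mul_mul_diagonal hd]
    _ = (n + 1) / 2 := by rw [Fintype.card_fin]

/-- If `X` is a bipartite graph on `n` vertices whose adjacency matrix has all simple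
eigenvalues, then the rank of its average mixing matrix `∑ r, E r ⊙ E r` is at most
`⌊(n+1)/2⌋`. -/
theorem rank_avg_mixing_le_of_bipartite_simple_eigenvalues (n : ℕ)
    (G : SimpleGraph (Fin n)) [DecidableRel G.Adj]
    (hbip : G.Colorable 2)
    (θ : Fin n → ℝ) (hθ : Function.Injective θ)
    (E : Fin n → Matrix (Fin n) (Fin n) ℝ)
    (hEsymm : ∀ r, (E r)ᵀ = E r)
    (hEidem : ∀ r, E r * E r = E r)
    (hEorth : ∀ r s, r ≠ s → E r * E s = 0)
    (hEsum : ∑ r, E r = 1)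
    (hErank : ∀ r, (E r).rank = 1)
    (hdecomp : G.adjMatrix ℝ = ∑ r, θ r • E r) :
    (∑ r, E r ⊙ E r).rank ≤ (n + 1) / 2 :=
  rank_avg_mixing_le_of_bipartite_simple_eigenvalues_general n G hbip θ hθ E hEidem hEorth hEsum
    hErank hdecomp
end

section
/- Let X be a graph and let S be a proper subset of the vertex set of X. Assume that for each vertex a ∈ S there is an automorphism of X whose only fixed point is a. Then the rank of the average mixing matrix of X is at least |S| + 1. -/
open Matrix BigOperators

private lemma trace_mul_self_symm {n : ℕ} (B : Matrix (Fin n) (Fin n) ℝ) (hB : Bᵀ = B) :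
    Matrix.trace (B * B) = ∑ u : Fin n, ∑ v : Fin n, (B u v)^2 := by
  rw [Matrix.trace]
  simp only [Matrix.diag_apply, Matrix.mul_apply, sq]
  refine Finset.sum_congr rfl fun u _ => Finset.sum_congr rfl fun v _ => ?_
  have h := congrFun (congrFun hB u) v
  simp only [Matrix.transpose_apply] at h
  rw [h]

/-- If `S` is a proper subset of the vertices of a graph `X` such that every vertex `a` in
`S` is the unique fixed point of some automorphism of `X`, then the rank of the average
mixing matrix `∑ r, E r ⊙ E r` is at least `|S| + 1`. -/
theorem rank_avg_mixing_ge_of_unique_fixed_points (n d : ℕ)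
    (G : SimpleGraph (Fin n)) [DecidableRel G.Adj]
    (θ : Fin d → ℝ) (hθ : Function.Injective θ)
    (E : Fin d → Matrix (Fin n) (Fin n) ℝ)
    (hEsymm : ∀ r, (E r)ᵀ = E r)
    (hEidem : ∀ r, E r * E r = E r)
    (hEorth : ∀ r s, r ≠ s → E r * E s = 0)
    (hEsum : ∑ r, E r = 1)
    (hdecomp : G.adjMatrix ℝ = ∑ r, θ r • E r)
    (S : Finset (Fin n)) (hS : S ⊂ Finset.univ)
    (hfix : ∀ a ∈ S, ∃ σ : G ≃g G, ∀ v, σ v = v ↔ v = a) :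
    S.card + 1 ≤ (∑ r, E r ⊙ E r).rank := by
  classical
  set A := G.adjMatrix ℝ with hA
  set M : Matrix (Fin n) (Fin n) ℝ := ∑ r, E r ⊙ E r with hM
  -- E r * A = θ r • E r and A * E r = θ r • E r
  have hEA : ∀ r, E r * A = θ r • E r := by
    intro r
    rw [hdecomp, Finset.mul_sum]
    rw [Finset.sum_eq_single r]
    · rw [Matrix.mul_smul, hEidem]
    · intro s _ hs
      rw [Matrix.mul_smul, hEorth r s (Ne.symm hs), smul_zero]
    · intro h; exact absurd (Finset.mem_univ r) h
  have hAE : ∀ r, A * E r = θ r • E r := by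
    intro r
    rw [hdecomp, Finset.sum_mul]
    rw [Finset.sum_eq_single r]
    · rw [Matrix.smul_mul, hEidem]
    · intro s _ hs
      rw [Matrix.smul_mul, hEorth s r hs, smul_zero]
    · intro h; exact absurd (Finset.mem_univ r) h
  -- anything commuting with A commutes with each E r
  have hcomm : ∀ Q : Matrix (Fin n) (Fin n) ℝ, Q * A = A * Q → ∀ r, Q * E r = E r * Q := by
    intro Q hQA r
    have hcross : ∀ s t, s ≠ t → E s * Q * E t = 0 := by
      intro s t hst
      have h1 : θ s • (E s * Q * E t) = θ t • (E s * Q * E t) := by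
        calc θ s • (E s * Q * E t) = (θ s • E s) * Q * E t := by
              rw [Matrix.smul_mul, Matrix.smul_mul]
          _ = E s * A * Q * E t := by rw [hEA]
          _ = E s * (A * Q) * E t := by rw [mul_assoc (E s)]
          _ = E s * (Q * A) * E t := by rw [hQA]
          _ = E s * Q * (A * E t) := by
              simp only [mul_assoc]
          _ = E s * Q * (θ t • E t) := by rw [hAE]
          _ = θ t • (E s * Q * E t) := by rw [Matrix.mul_smul]
      have h2 : (θ s - θ t) • (E s * Q * E t) = 0 := by rw [sub_smul, h1, sub_self]
      have h3 : θ s - θ t ≠ 0 := sub_ne_zero.mpr fun h => hst (hθ h)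
      exact (smul_eq_zero.mp h2).resolve_left h3
    have hL : Q * E r = E r * Q * E r := by
      calc Q * E r = (∑ s, E s) * (Q * E r) := by rw [hEsum, one_mul]
        _ = ∑ s, E s * (Q * E r) := Finset.sum_mul _ _ _
        _ = E r * (Q * E r) := Finset.sum_eq_single r
            (fun s _ hs => by rw [← mul_assoc]; exact hcross s r hs)
            (fun h => absurd (Finset.mem_univ r) h)
        _ = E r * Q * E r := by rw [mul_assoc]
    have hR : E r * Q = E r * Q * E r := by
      calc E r * Q = (E r * Q) * ∑ s, E s := by rw [hEsum, mul_one]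
        _ = ∑ s, (E r * Q) * E s := Finset.mul_sum _ _ _
        _ = E r * Q * E r := Finset.sum_eq_single r
            (fun s _ hs => hcross r s (Ne.symm hs))
            (fun h => absurd (Finset.mem_univ r) h)
    rw [hL, ← hR]
  -- automorphisms give permutation matrices commuting with A
  have hPcomm : ∀ σ : G ≃g G,
      (Matrix.of fun u v => if σ v = u then (1:ℝ) else 0) * A
        = A * (Matrix.of fun u v => if σ v = u then (1:ℝ) else 0) := by
    intro σ
    ext u v
    have hL : ((Matrix.of fun u v => if σ v = u then (1:ℝ) else 0) * A) u v
        = A (σ.symm u) v := by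
      rw [Matrix.mul_apply]
      rw [Finset.sum_eq_single (σ.symm u)]
      · simp
      · intro w _ hw
        have hne : ¬ (σ w = u) := by
          intro h; apply hw; rw [← h]; simp
        simp [hne]
      · intro h; exact absurd (Finset.mem_univ _) h
    have hR : (A * (Matrix.of fun u v => if σ v = u then (1:ℝ) else 0)) u v
        = A u (σ v) := by
      rw [Matrix.mul_apply]
      rw [Finset.sum_eq_single (σ v)]
      · simp
      · intro w _ hw
        simp [Ne.symm hw]
      · intro h; exact absurd (Finset.mem_univ _) h
    rw [hL, hR, hA]
    have hadj : G.Adj (σ.symm u) v ↔ G.Adj u (σ v) := by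
      conv_lhs => rw [← σ.map_adj_iff]
      rw [RelIso.apply_symm_apply]
    simp only [SimpleGraph.adjMatrix_apply]
    exact if_congr hadj rfl rfl
  -- M is symmetric
  have hMsymm : Mᵀ = M := by
    rw [hM, Matrix.transpose_sum]
    refine Finset.sum_congr rfl fun r _ => ?_
    ext i j
    have h := congrFun (congrFun (hEsymm r) j) i
    simp only [Matrix.transpose_apply] at h
    simp only [Matrix.transpose_apply, Matrix.hadamard_apply]
    rw [h]
  -- kernel vectors vanish on S and sum to zero
  have hkermem : ∀ x : Fin n → ℝ, M.mulVec x = 0 →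
      (∀ a ∈ S, x a = 0) ∧ (∑ v, x v = 0) := by
    intro x hx
    set D : Matrix (Fin n) (Fin n) ℝ := Matrix.diagonal x with hD
    -- the quadratic form vanishes
    have hvm : x ᵥ* M = 0 := by
      rw [← Matrix.mulVec_transpose, hMsymm, hx]
    have hvsum : x ᵥ* M = ∑ r, x ᵥ* (E r ⊙ E r) := by
      rw [hM]
      ext j
      simp only [Matrix.vecMul, dotProduct, Finset.sum_apply, Matrix.sum_apply,
        Finset.mul_sum]
      exact Finset.sum_comm
    have hdsum : (∑ r, x ᵥ* (E r ⊙ E r)) ⬝ᵥ x = ∑ r, (x ᵥ* (E r ⊙ E r)) ⬝ᵥ x := by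
      simp only [dotProduct, Finset.sum_apply, Finset.sum_mul]
      exact Finset.sum_comm
    have hq0 : ∑ r, (x ᵥ* (E r ⊙ E r)) ⬝ᵥ x = 0 := by
      rw [← hdsum, ← hvsum, hvm, zero_dotProduct]
    -- each summand equals a sum of squares
    have hqr : ∀ r, (x ᵥ* (E r ⊙ E r)) ⬝ᵥ x
        = ∑ u, ∑ v, ((E r * D * E r) u v)^2 := by
      intro r
      rw [Matrix.dotProduct_vecMul_hadamard]
      rw [← hD]
      have hEDt : (E r * D)ᵀ = D * E r := by
        rw [Matrix.transpose_mul, hEsymm, hD, Matrix.diagonal_transpose]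
      rw [hEDt]
      -- now : trace (D * E r * (D * E r)) = ∑ squares
      have e1 : (E r * D * E r) * (E r * D * E r)
          = E r * (D * (E r * (D * E r))) := by
        calc (E r * D * E r) * (E r * D * E r)
            = E r * (D * ((E r * E r) * (D * E r))) := by
              simp only [mul_assoc]
          _ = E r * (D * (E r * (D * E r))) := by rw [hEidem]
      have e2 : (D * (E r * (D * E r))) * E r = D * E r * (D * E r) := by
        calc (D * (E r * (D * E r))) * E r
            = D * (E r * (D * (E r * E r))) := by simp only [mul_assoc]
          _ = D * (E r * (D * E r)) := by rw [hEidem]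
          _ = D * E r * (D * E r) := by simp only [mul_assoc]
      have e3 : Matrix.trace (D * E r * (D * E r))
          = Matrix.trace ((E r * D * E r) * (E r * D * E r)) := by
        rw [e1, Matrix.trace_mul_comm (E r) (D * (E r * (D * E r))), e2]
      rw [e3]
      -- symmetry of B := E r * D * E r
      have hBsym : (E r * D * E r)ᵀ = E r * D * E r := by
        rw [Matrix.transpose_mul, Matrix.transpose_mul, hEsymm, hD,
          Matrix.diagonal_transpose, ← hD, mul_assoc]
      exact trace_mul_self_symm _ hBsym
    -- hence each E r * D * E r = 0
    have hB : ∀ r, E r * D * E r = 0 := by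
      have hnn : ∀ r ∈ Finset.univ, (0:ℝ) ≤ (x ᵥ* (E r ⊙ E r)) ⬝ᵥ x := by
        intro r _
        rw [hqr r]
        exact Finset.sum_nonneg fun u _ => Finset.sum_nonneg fun v _ => sq_nonneg _
      have hz := (Finset.sum_eq_zero_iff_of_nonneg hnn).mp hq0
      intro r
      have hzr := hz r (Finset.mem_univ r)
      rw [hqr r] at hzr
      have hzz := (Finset.sum_eq_zero_iff_of_nonneg
        (fun u _ => Finset.sum_nonneg fun v _ => sq_nonneg _)).mp hzr
      ext u v
      have := (Finset.sum_eq_zero_iff_of_nonneg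
        (fun v _ => sq_nonneg (((E r * D * E r)) u v))).mp (hzz u (Finset.mem_univ u))
        v (Finset.mem_univ v)
      simpa using sq_eq_zero_iff.mp this
    -- trace (Q * D) = 0 for any Q commuting with all E r
    have htr : ∀ Q : Matrix (Fin n) (Fin n) ℝ,
        (∀ r, Q * E r = E r * Q) → Matrix.trace (Q * D) = 0 := by
      intro Q hQ
      have h1 : Q * D = (Q * D) * ∑ r, E r := by rw [hEsum, mul_one]
      rw [h1, Finset.mul_sum, Matrix.trace_sum]
      refine Finset.sum_eq_zero fun r _ => ?_
      have e1 : (Q * D) * E r = (Q * (D * E r)) := by rw [mul_assoc]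
      have e2 : Matrix.trace (Q * (D * E r)) = Matrix.trace (Q * (D * (E r * E r))) := by
        rw [hEidem]
      have e3 : Q * (D * (E r * E r)) = (Q * (D * E r)) * E r := by
        simp only [mul_assoc]
      have e4 : Matrix.trace ((Q * (D * E r)) * E r)
          = Matrix.trace (E r * (Q * (D * E r))) := Matrix.trace_mul_comm _ _
      have e5 : E r * (Q * (D * E r)) = (E r * Q) * (D * E r) := by rw [mul_assoc]
      have e6 : (E r * Q) * (D * E r) = Q * (E r * D * E r) := by
        rw [← hQ r]
        simp only [mul_assoc]
      rw [e1, e2, e3, e4, e5, e6, hB r, mul_zero, Matrix.trace_zero]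
    constructor
    · intro a ha
      obtain ⟨σ, hσ⟩ := hfix a ha
      set P : Matrix (Fin n) (Fin n) ℝ :=
        Matrix.of fun u v => if σ v = u then (1:ℝ) else 0 with hP
      have hQ := hcomm P (hPcomm σ)
      have htrP := htr P hQ
      have : Matrix.trace (P * D) = x a := by
        rw [Matrix.trace]
        have hdiag : ∀ u, (P * D) u u = (if σ u = u then (1:ℝ) else 0) * x u := by
          intro u
          rw [hD, Matrix.mul_diagonal]
          rfl
        simp only [Matrix.diag_apply, hdiag]
        rw [Finset.sum_eq_single a]
        · rw [(hσ a).mpr rfl |> fun h => if_pos h, one_mul]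
        · intro u _ hu
          rw [if_neg (fun h => hu ((hσ u).mp h)), zero_mul]
        · intro h; exact absurd (Finset.mem_univ _) h
      rw [this] at htrP
      exact htrP
    · have htrI := htr 1 (fun r => by rw [one_mul, mul_one])
      rw [one_mul, hD, Matrix.trace_diagonal] at htrI
      exact htrI
  -- rank argument
  have hn : Module.finrank ℝ (Fin n → ℝ) = n := by simp
  set f := M.mulVecLin with hf
  -- the comparison map
  set L2 : (Fin n → ℝ) →ₗ[ℝ] ℝ :=
    { toFun := fun x => ∑ v, x v
      map_add' := by intro a b; simp [Finset.sum_add_distrib]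
      map_smul' := by intro c a; simp [Finset.mul_sum] } with hL2
  set L : (Fin n → ℝ) →ₗ[ℝ] (↥S → ℝ) × ℝ :=
    (LinearMap.funLeft ℝ ℝ (fun a : ↥S => (a : Fin n))).prod L2 with hLdef
  obtain ⟨b, _, hb⟩ := Finset.exists_of_ssubset hS
  have hsurj : Function.Surjective L := by
    rintro ⟨g, c⟩
    refine ⟨fun v => if h : v ∈ S then g ⟨v, h⟩ else
      (if v = b then c - ∑ a : ↥S, g a else 0), ?_⟩
    have h1 : ∀ a : ↥S, (if h : (a:Fin n) ∈ S then g ⟨(a:Fin n), h⟩ else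
        (if (a:Fin n) = b then c - ∑ a : ↥S, g a else 0)) = g a := by
      intro a; rw [dif_pos a.2]
    have h2 : ∑ v, (if h : v ∈ S then g ⟨v, h⟩ else
        (if v = b then c - ∑ a : ↥S, g a else 0)) = c := by
      rw [← Finset.sum_add_sum_compl S]
      have hs1 : ∑ v ∈ S, (if h : v ∈ S then g ⟨v, h⟩ else
          (if v = b then c - ∑ a : ↥S, g a else 0)) = ∑ a : ↥S, g a := by
        rw [← Finset.sum_attach S]
        refine Finset.sum_congr rfl fun a _ => by rw [dif_pos a.2]
      have hs2 : ∑ v ∈ Sᶜ, (if h : v ∈ S then g ⟨v, h⟩ else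
          (if v = b then c - ∑ a : ↥S, g a else 0)) = c - ∑ a : ↥S, g a := by
        have : ∀ v ∈ Sᶜ, (if h : v ∈ S then g ⟨v, h⟩ else
            (if v = b then c - ∑ a : ↥S, g a else 0))
            = if v = b then c - ∑ a : ↥S, g a else 0 := by
          intro v hv
          rw [dif_neg (Finset.mem_compl.mp hv)]
        rw [Finset.sum_congr rfl this, Finset.sum_ite_eq' Sᶜ b,
          if_pos (Finset.mem_compl.mpr hb)]
      rw [hs1, hs2]
      ring
    refine Prod.ext ?_ ?_
    · funext a
      exact h1 a
    · exact h2
  have hrangeL : Module.finrank ℝ (LinearMap.range L) = S.card + 1 := by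
    rw [LinearMap.range_eq_top.mpr hsurj, finrank_top]
    simp [Fintype.card_coe]
  have hkerle : LinearMap.ker f ≤ LinearMap.ker L := by
    intro x hx
    rw [LinearMap.mem_ker, hf, Matrix.mulVecLin_apply] at hx
    obtain ⟨hxa, hxs⟩ := hkermem x hx
    rw [LinearMap.mem_ker]
    refine Prod.ext ?_ ?_
    · funext a
      exact hxa a a.2
    · exact hxs
  have hfinker : Module.finrank ℝ (LinearMap.ker f)
      ≤ Module.finrank ℝ (LinearMap.ker L) := Submodule.finrank_mono hkerle
  have hrn1 : M.rank + Module.finrank ℝ (LinearMap.ker f) = n := by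
    have h := LinearMap.finrank_range_add_finrank_ker f
    rw [hn] at h
    exact h
  have hrn2 : (S.card + 1) + Module.finrank ℝ (LinearMap.ker L) = n := by
    have h := LinearMap.finrank_range_add_finrank_ker L
    rw [hrangeL, hn] at h
    exact h
  omega
end

section
/- Let X be a connected graph on n ≥ 3 vertices whose adjacency matrix has n distinct (i.e., all simple) eigenvalues, and suppose the rank of the average mixing matrix of X equals n − 1. Then every automorphism of X has a fixed point. -/
open Matrix BigOperators

private lemma rank_one_minor {n : ℕ} (M : Matrix (Fin n) (Fin n) ℝ) (h : M.rank = 1) :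
    ∀ a b c d, M a b * M c d = M a d * M c b := by
  rw [Matrix.rank] at h
  obtain ⟨v, hv0, hv⟩ := finrank_eq_one_iff'.mp h
  have hcol : ∀ b : Fin n, ∃ cc : ℝ, ∀ a, M a b = cc * (v : Fin n → ℝ) a := by
    intro b
    have hmem : (fun a => M a b) ∈ LinearMap.range M.mulVecLin := by
      refine ⟨Pi.single b 1, ?_⟩
      ext a
      simp [Matrix.mulVecLin_apply, Matrix.mulVec_single]
    obtain ⟨cc, hcc⟩ := hv ⟨_, hmem⟩
    refine ⟨cc, fun a => ?_⟩
    have h1 : cc • (v : Fin n → ℝ) = fun a => M a b := congrArg Subtype.val hcc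
    have h2 := congrFun h1 a
    simpa using h2.symm
  intro a b c d
  obtain ⟨cb, hcb⟩ := hcol b
  obtain ⟨cd, hcd⟩ := hcol d
  rw [hcb, hcd, hcb, hcd]; ring

/-- If `X` is a connected graph on `n ≥ 3` vertices with all simple eigenvalues whose
average mixing matrix `∑ r, E r ⊙ E r` has rank `n - 1`, then every automorphism of `X`
has a fixed point. -/
theorem automorphism_fixed_point_of_rank_avg_mixing (n : ℕ) (hn : 3 ≤ n)
    (G : SimpleGraph (Fin n)) [DecidableRel G.Adj]
    (hconn : G.Connected)
    (θ : Fin n → ℝ) (hθ : Function.Injective θ)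
    (E : Fin n → Matrix (Fin n) (Fin n) ℝ)
    (hEsymm : ∀ r, (E r)ᵀ = E r)
    (hEidem : ∀ r, E r * E r = E r)
    (hEorth : ∀ r s, r ≠ s → E r * E s = 0)
    (hEsum : ∑ r, E r = 1)
    (hErank : ∀ r, (E r).rank = 1)
    (hdecomp : G.adjMatrix ℝ = ∑ r, θ r • E r)
    (hrank : (∑ r, E r ⊙ E r).rank = n - 1) :
    ∀ σ : G ≃g G, ∃ a, σ a = a := by
  intro σ
  by_contra hfix
  push_neg at hfix
  set A := G.adjMatrix ℝ with hA
  set e : Fin n ≃ Fin n := σ.toEquiv with he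
  have hfix' : ∀ a, e a ≠ a := fun a h => hfix a h
  -- invariance of the adjacency matrix
  have hAinv : A.submatrix e e = A := by
    ext a b
    simp only [submatrix_apply, hA, SimpleGraph.adjMatrix_apply]
    congr 1
    simp only [eq_iff_iff]
    exact σ.map_adj_iff
  -- eigen-equations
  have hAE : ∀ r, A * E r = θ r • E r := by
    intro r
    rw [hdecomp, Finset.sum_mul, Finset.sum_eq_single r]
    · rw [smul_mul_assoc, hEidem]
    · intro s _ hs
      rw [smul_mul_assoc, hEorth s r hs, smul_zero]
    · simp
  have hEA : ∀ r, E r * A = θ r • E r := by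
    intro r
    rw [hdecomp, Finset.mul_sum, Finset.sum_eq_single r]
    · rw [mul_smul_comm, hEidem]
    · intro s _ hs
      rw [mul_smul_comm, hEorth r s (Ne.symm hs), smul_zero]
    · simp
  set F : Fin n → Matrix (Fin n) (Fin n) ℝ := fun r => (E r).submatrix e e with hFdef
  have hAF : ∀ r, A * F r = θ r • F r := by
    intro r
    calc A * F r = A.submatrix e e * (E r).submatrix e e := by rw [hAinv]
      _ = (A * E r).submatrix e e := submatrix_mul_equiv A (E r) e e e
      _ = (θ r • E r).submatrix e e := by rw [hAE r]
      _ = θ r • F r := rfl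
  have hEFo : ∀ r s, r ≠ s → E r * F s = 0 := by
    intro r s hrs
    have h1 : θ r • (E r * F s) = θ s • (E r * F s) := by
      calc θ r • (E r * F s) = (θ r • E r) * F s := (smul_mul_assoc _ _ _).symm
        _ = (E r * A) * F s := by rw [hEA r]
        _ = E r * (A * F s) := mul_assoc _ _ _
        _ = E r * (θ s • F s) := by rw [hAF s]
        _ = θ s • (E r * F s) := mul_smul_comm _ _ _
    have key : (θ r - θ s) • (E r * F s) = 0 := by
      rw [sub_smul, h1, sub_self]
    rcases smul_eq_zero.mp key with h | h
    · exact absurd (sub_eq_zero.mp h) (hθ.ne hrs)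
    · exact h
  have hFsum : ∑ s, F s = 1 := by
    have h1 : (∑ s, E s).submatrix e e = ∑ s, F s := by
      ext a b
      simp [Matrix.sum_apply, submatrix_apply, hFdef]
    rw [hEsum, submatrix_one_equiv] at h1
    exact h1.symm
  have hEF : ∀ r, F r = E r := by
    intro r
    have h6 : E r * F r = E r := by
      calc E r * F r = ∑ s, E r * F s := (Finset.sum_eq_single r
              (fun s _ hs => hEFo r s (Ne.symm hs))
              (fun h => absurd (Finset.mem_univ r) h)).symm
        _ = E r * ∑ s, F s := (Finset.mul_sum _ _ _).symm
        _ = E r := by rw [hFsum, mul_one]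
    have h7 : E r * F r = F r := by
      calc E r * F r = ∑ s, E s * F r := (Finset.sum_eq_single r
              (fun s _ hs => hEFo s r hs)
              (fun h => absurd (Finset.mem_univ r) h)).symm
        _ = (∑ s, E s) * F r := (Finset.sum_mul _ _ _).symm
        _ = F r := by rw [hEsum, one_mul]
    rw [← h7, h6]
  have hinv : ∀ r a b, E r (e a) (e b) = E r a b := by
    intro r a b
    have h1 := congrFun (congrFun (hEF r) a) b
    simpa [hFdef, submatrix_apply] using h1
  -- entries of the average mixing matrix
  have hsq : ∀ r (a b : Fin n), E r a b * E r a b = E r a a * E r b b := by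
    intro r a b
    have hm := rank_one_minor (E r) (hErank r) a b b a
    have hsymm : E r b a = E r a b := by
      have h1 := congrFun (congrFun (hEsymm r) b) a
      simpa [transpose_apply] using h1.symm
    calc E r a b * E r a b = E r a b * E r b a := by rw [hsymm]
      _ = E r a a * E r b b := by rw [hm]
  set Mh : Matrix (Fin n) (Fin n) ℝ := ∑ r, E r ⊙ E r with hMh
  have hMent : ∀ a b, Mh a b = ∑ r, E r a a * E r b b := by
    intro a b
    rw [hMh, Matrix.sum_apply]
    refine Finset.sum_congr rfl fun r _ => ?_
    rw [Matrix.hadamard_apply]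
    exact hsq r a b
  -- column invariance
  have hcc : ∀ a, Mhᵀ (e a) = Mhᵀ a := by
    intro a
    funext b
    show Mh b (e a) = Mh b a
    rw [hMent, hMent]
    refine Finset.sum_congr rfl fun r _ => ?_
    have := hinv r a a
    rw [this]
  -- find two removable indices
  have hcard2 : ∀ x y : Fin n, ∃ z, z ≠ x ∧ z ≠ y := by
    intro x y
    have hne : (({x, y}ᶜ : Finset (Fin n))).Nonempty := by
      rw [← Finset.card_pos, Finset.card_compl]
      have hle : ({x, y} : Finset (Fin n)).card ≤ 2 :=
        (Finset.card_insert_le x {y}).trans (by simp)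
      simp only [Fintype.card_fin]
      omega
    obtain ⟨z, hz⟩ := hne
    rw [Finset.mem_compl, Finset.mem_insert, Finset.mem_singleton] at hz
    push_neg at hz
    exact ⟨z, hz.1, hz.2⟩
  obtain ⟨s, t, hst, hcover⟩ :
      ∃ s t : Fin n, s ≠ t ∧ ∀ x : Fin n, ∃ y, y ≠ s ∧ y ≠ t ∧ Mhᵀ y = Mhᵀ x := by
    set a0 : Fin n := ⟨0, by omega⟩ with ha0
    by_cases h2 : e (e a0) = a0
    · obtain ⟨b, hba, hbs⟩ := hcard2 a0 (e a0)
      refine ⟨e a0, e b, fun hh => hba (e.injective hh).symm, ?_⟩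
      intro x
      by_cases hx1 : x = e a0
      · refine ⟨a0, (hfix' a0).symm, ?_, by rw [hx1]; exact (hcc a0).symm⟩
        intro hh
        exact hbs (e.injective (h2.trans hh)).symm
      · by_cases hx2 : x = e b
        · exact ⟨b, hbs, (hfix' b).symm, by rw [hx2]; exact (hcc b).symm⟩
        · exact ⟨x, hx1, hx2, rfl⟩
    · refine ⟨e a0, e (e a0), fun hh => hfix' a0 (e.injective hh).symm, ?_⟩
      intro x
      by_cases hx1 : x = e a0
      · exact ⟨a0, (hfix' a0).symm, Ne.symm h2, by rw [hx1]; exact (hcc a0).symm⟩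
      · by_cases hx2 : x = e (e a0)
        · exact ⟨a0, (hfix' a0).symm, Ne.symm h2,
            by rw [hx2]; exact ((hcc (e a0)).trans (hcc a0)).symm⟩
        · exact ⟨x, hx1, hx2, rfl⟩
  -- rank bound
  have hle : Mh.rank ≤ n - 2 := by
    rw [Matrix.rank_eq_finrank_span_cols]
    have hsub : Set.range Mhᵀ ⊆
        ↑((({s, t}ᶜ : Finset (Fin n))).image Mhᵀ) := by
      rintro v ⟨x, rfl⟩
      obtain ⟨y, hy1, hy2, hy3⟩ := hcover x
      refine Finset.mem_coe.mpr (Finset.mem_image.mpr ⟨y, ?_, hy3⟩)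
      simp [Finset.mem_compl, hy1, hy2]
    calc Module.finrank ℝ (Submodule.span ℝ (Set.range Mhᵀ))
        ≤ Module.finrank ℝ (Submodule.span ℝ
            (↑((({s, t}ᶜ : Finset (Fin n))).image Mhᵀ) : Set (Fin n → ℝ))) :=
          Submodule.finrank_mono (Submodule.span_mono hsub)
      _ ≤ (({s, t}ᶜ : Finset (Fin n)).image Mhᵀ).card := finrank_span_finset_le_card _
      _ ≤ ({s, t}ᶜ : Finset (Fin n)).card := Finset.card_image_le
      _ = n - 2 := by rw [Finset.card_compl, Finset.card_pair hst, Fintype.card_fin]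
  rw [hrank] at hle
  omega
end
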